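/- arXiv:2212.01788 — 8 statements merged into one kernel-verified Lean document; each statement's English description precedes it below -/
import Mathlib

section
/- Let n ≥ 1, let A = (a_{ij}) be a real n×n matrix satisfying the cyclic non-increasing condition, let λ ∈ ℝ, and suppose the vector x ∈ ℝⁿ satisfies Aᵀx = λe, where e is the all-ones vector. Let D be the union of the open strongly connected components of the graph 𝒢(A). If D is nonempty, then x_i = 0 for every index i ∈ D. -/
open Matrix BigOperators

/-- The cyclic non-increasing condition: each row of `A` weakly decreases
cyclically starting from the diagonal, i.e. `a_{i[j-1]} ≥ a_{ij}` for all
`j ≠ i` (indices in `Fin n`, arithmetic mod `n`). -/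
def CyclicNonIncr {n : ℕ} [NeZero n] (A : Matrix (Fin n) (Fin n) ℝ) : Prop :=
  ∀ i j : Fin n, j ≠ i → A i (j - 1) ≥ A i j

/-- The directed graph `𝒢(A)` has an edge from `i` to `j` iff `a_{i[j-1]} > a_{ij}`. -/
def GraphEdge {n : ℕ} [NeZero n] (A : Matrix (Fin n) (Fin n) ℝ) (i j : Fin n) : Prop :=
  A i (j - 1) > A i j

/-- `i` and `j` are strongly connected in `𝒢(A)`: there are directed paths
(possibly of length 0) from `i` to `j` and from `j` to `i`. -/
def Conn {n : ℕ} [NeZero n] (A : Matrix (Fin n) (Fin n) ℝ) (i j : Fin n) : Prop :=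
  Relation.ReflTransGen (GraphEdge A) i j ∧ Relation.ReflTransGen (GraphEdge A) j i

/-- `C` is a strongly connected component of `𝒢(A)`: an equivalence class of
the strong-connectivity relation. -/
def IsSCC {n : ℕ} [NeZero n] (A : Matrix (Fin n) (Fin n) ℝ) (C : Set (Fin n)) : Prop :=
  ∃ i, C = {j | Conn A i j}

/-- `C` is a closed SCC of `𝒢(A)`: an SCC with no edge leaving it. -/
def IsClosedSCC {n : ℕ} [NeZero n] (A : Matrix (Fin n) (Fin n) ℝ) (C : Set (Fin n)) : Prop :=
  IsSCC A C ∧ ∀ i ∈ C, ∀ j, GraphEdge A i j → j ∈ C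

/-- `C` is an open SCC of `𝒢(A)`: an SCC with some edge leaving it. -/
def IsOpenSCC {n : ℕ} [NeZero n] (A : Matrix (Fin n) (Fin n) ℝ) (C : Set (Fin n)) : Prop :=
  IsSCC A C ∧ ¬ (∀ i ∈ C, ∀ j, GraphEdge A i j → j ∈ C)

theorem stmt_0 (n : ℕ) [NeZero n] (hn : 1 ≤ n) (A : Matrix (Fin n) (Fin n) ℝ)
    (hA : CyclicNonIncr A) (lam : ℝ) (x : Fin n → ℝ)
    (hx : Aᵀ.mulVec x = fun _ => lam)
    (D : Set (Fin n)) (hD : D = {i | ∃ C, IsOpenSCC A C ∧ i ∈ C})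
    (hne : D.Nonempty) :
    ∀ i ∈ D, x i = 0 := by
  classical
  subst hD
  set E : Fin n → Fin n → Prop := GraphEdge A with hE
  have hconn_symm : ∀ {a c : Fin n}, Conn A a c → Conn A c a := fun h => ⟨h.2, h.1⟩
  have hconn_trans : ∀ {a c d : Fin n}, Conn A a c → Conn A c d → Conn A a d :=
    fun h1 h2 => ⟨h1.1.trans h2.1, h2.2.trans h1.2⟩
  have hconn_refl : ∀ a : Fin n, Conn A a a := fun a =>
    ⟨Relation.ReflTransGen.refl, Relation.ReflTransGen.refl⟩
  -- columns sums
  have hcol : ∀ j, ∑ i, A i j * x i = lam := by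
    intro j
    have := congrFun hx j
    simpa [Matrix.mulVec, dotProduct, Matrix.transpose_apply] using this
  set b : Fin n → Fin n → ℝ := fun i j => A i (j - 1) - A i j with hbdef
  have hbE : ∀ i j, E i j ↔ 0 < b i j := by
    intro i j; simp [hE, GraphEdge, hbdef, sub_pos]
  have h0 : ∀ j, ∑ i, b i j * x i = 0 := by
    intro j
    simp only [hbdef, sub_mul, Finset.sum_sub_distrib, hcol, sub_self]
  have hbnn : ∀ i j : Fin n, i ≠ j → 0 ≤ b i j := fun i j h =>
    sub_nonneg.2 (hA i j (Ne.symm h))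
  have hrow : ∀ i, ∑ j, b i j = 0 := by
    intro i
    simp only [hbdef, Finset.sum_sub_distrib]
    have h : ∑ j : Fin n, A i (j - 1) = ∑ j : Fin n, A i j :=
      Fintype.sum_equiv (Equiv.subRight (1 : Fin n)) _ _ (fun j => rfl)
    linarith
  set out : Fin n → ℝ := fun i => ∑ j ∈ Finset.univ.erase i, b i j with houtdef
  have hbdiag : ∀ i, b i i = -out i := by
    intro i
    have := Finset.add_sum_erase Finset.univ (fun j => b i j) (Finset.mem_univ i)
    rw [hrow i] at this
    simp only [houtdef]
    linarith
  have hout_nn : ∀ i, 0 ≤ out i := by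
    intro i
    refine Finset.sum_nonneg fun j hj => hbnn i j ?_
    exact fun h => (Finset.mem_erase.1 hj).1 h.symm
  -- no self-edges
  have hnoself : ∀ d : Fin n, ¬ E d d := by
    intro d hd
    have h1 := (hbE d d).1 hd
    have := hbdiag d
    have := hout_nn d
    linarith
  -- setup: the offending set
  intro p hp
  by_contra hxp
  set PF : Finset (Fin n) :=
    Finset.univ.filter (fun k => (∃ C, IsOpenSCC A C ∧ k ∈ C) ∧ x k ≠ 0) with hPFdef
  have hPFne : PF.Nonempty := ⟨p, by simp [hPFdef]; exact ⟨hp, hxp⟩⟩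
  obtain ⟨i1, hi1P, hmax⟩ := PF.exists_max_image
    (fun k => (Finset.univ.filter (fun m => Relation.ReflTransGen E k m)).card) hPFne
  have hi1P' : (∃ C, IsOpenSCC A C ∧ i1 ∈ C) ∧ x i1 ≠ 0 := by
    simpa [hPFdef] using hi1P
  -- maximality: anything nonzero in D that reaches i1 is in i1's component
  have hmaxconn : ∀ k : Fin n, (∃ C, IsOpenSCC A C ∧ k ∈ C) → x k ≠ 0 →
      Relation.ReflTransGen E k i1 → Conn A i1 k := by
    intro k hkD hkx hki
    have hkPF : k ∈ PF := by simp [hPFdef]; exact ⟨hkD, hkx⟩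
    have hsub : (Finset.univ.filter (fun m => Relation.ReflTransGen E i1 m)) ⊆
        (Finset.univ.filter (fun m => Relation.ReflTransGen E k m)) := by
      intro m hm
      simp only [Finset.mem_filter, Finset.mem_univ, true_and] at hm ⊢
      exact hki.trans hm
    have hcard := hmax k hkPF
    have heq := Finset.eq_of_subset_of_card_le hsub hcard
    have hkk : k ∈ (Finset.univ.filter (fun m => Relation.ReflTransGen E k m)) :=
      Finset.mem_filter.2 ⟨Finset.mem_univ k, Relation.ReflTransGen.refl⟩
    rw [← heq] at hkk
    simp only [Finset.mem_filter, Finset.mem_univ, true_and] at hkk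
    exact ⟨hkk, hki⟩
  -- the component of i1
  set S : Finset (Fin n) := Finset.univ.filter (fun j => Conn A i1 j) with hSdef
  have hi1S : i1 ∈ S := by simp [hSdef]; exact hconn_refl i1
  -- C is open
  obtain ⟨⟨C0, hC0open, hi1C0⟩, hxi1⟩ := hi1P'
  obtain ⟨i0, hi0⟩ := hC0open.1
  have hC0eq : C0 = {j | Conn A i1 j} := by
    rw [hi0] at hi1C0 ⊢
    ext j
    simp only [Set.mem_setOf_eq]
    exact ⟨fun h => hconn_trans (hconn_symm hi1C0) h, fun h => hconn_trans hi1C0 h⟩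
  have hopen : ¬ (∀ i ∈ {j | Conn A i1 j}, ∀ j, GraphEdge A i j → j ∈ {j | Conn A i1 j}) := by
    rw [← hC0eq]; exact hC0open.2
  push_neg at hopen
  obtain ⟨istar, histar, jstar, hedge, hjstar⟩ := hopen
  have histarS : istar ∈ S := by simp [hSdef]; exact histar
  -- external in-neighbours of the component have x = 0
  have hext : ∀ i j : Fin n, Conn A i1 j → E i j → ¬ Conn A i1 i → x i = 0 := by
    intro i j hj hij hi
    by_contra hxi
    -- i is in an open SCC
    have hjK : ¬ Conn A i j := by
      intro h
      exact hi (hconn_trans hj (hconn_symm h))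
    have hiD : ∃ C, IsOpenSCC A C ∧ i ∈ C := by
      refine ⟨{k | Conn A i k}, ⟨⟨i, rfl⟩, ?_⟩, hconn_refl i⟩
      intro hall
      exact hjK (hall i (hconn_refl i) j hij)
    have hreach : Relation.ReflTransGen E i i1 :=
      (Relation.ReflTransGen.single hij).trans hj.2
    exact hi (hmaxconn i hiD hxi hreach)
  -- balance equations on S
  have hbal : ∀ j ∈ S, out j * x j = ∑ i ∈ S.erase j, b i j * x i := by
    intro j hjS
    have hjC : Conn A i1 j := by simpa [hSdef] using hjS
    have hsplit := Finset.sum_filter_add_sum_filter_not Finset.univ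
      (fun i => Conn A i1 i) (fun i => b i j * x i)
    rw [h0 j] at hsplit
    have hout0 : ∑ i ∈ Finset.univ.filter (fun i => ¬ Conn A i1 i), b i j * x i = 0 := by
      refine Finset.sum_eq_zero fun i hi => ?_
      simp only [Finset.mem_filter, Finset.mem_univ, true_and] at hi
      have hij : i ≠ j := fun h => hi (h ▸ hjC)
      rcases eq_or_lt_of_le (hbnn i j hij) with h | h
      · rw [← h, zero_mul]
      · rw [hext i j hjC ((hbE i j).2 h) hi, mul_zero]
    have hS0 : ∑ i ∈ S, b i j * x i = 0 := by
      rw [hSdef]; linarith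
    have hsplit2 : b j j * x j + ∑ i ∈ S.erase j, b i j * x i = 0 := by
      have h := Finset.add_sum_erase S (fun i => b i j * x i) hjS
      rw [hS0] at h
      simpa using h
    rw [hbdiag j] at hsplit2
    linarith
  -- inequality per column
  have key1 : ∀ j ∈ S, out j * |x j| ≤ ∑ i ∈ S.erase j, b i j * |x i| := by
    intro j hjS
    calc out j * |x j| = |out j * x j| := by
          rw [abs_mul, abs_of_nonneg (hout_nn j)]
      _ = |∑ i ∈ S.erase j, b i j * x i| := by rw [hbal j hjS]
      _ ≤ ∑ i ∈ S.erase j, |b i j * x i| := Finset.abs_sum_le_sum_abs _ _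
      _ = ∑ i ∈ S.erase j, b i j * |x i| := by
          refine Finset.sum_congr rfl fun i hi => ?_
          rw [abs_mul, abs_of_nonneg (hbnn i j (Finset.mem_erase.1 hi).1)]
  set g : Fin n → Fin n → ℝ := fun i j => (if i = j then 0 else b i j) * |x i| with hgdef
  have hg1 : ∀ j ∈ S, ∑ i ∈ S.erase j, b i j * |x i| = ∑ i ∈ S, g i j := by
    intro j hjS
    rw [← Finset.add_sum_erase S (fun i => g i j) hjS]
    have : g j j = 0 := by simp [hgdef]
    rw [this, zero_add]
    refine Finset.sum_congr rfl fun i hi => ?_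
    simp [hgdef, (Finset.mem_erase.1 hi).1]
  have hg2 : ∀ i ∈ S, ∑ j ∈ S, g i j ≤ out i * |x i| := by
    intro i hiS
    have e1 : ∑ j ∈ S, g i j = ∑ j ∈ S.erase i, b i j * |x i| := by
      rw [← Finset.add_sum_erase S (fun j => g i j) hiS]
      have : g i i = 0 := by simp [hgdef]
      rw [this, zero_add]
      refine Finset.sum_congr rfl fun j hj => ?_
      have hij : i ≠ j := fun h => (Finset.mem_erase.1 hj).1 h.symm
      simp [hgdef, hij]
    have e2 : out i * |x i| = ∑ j ∈ Finset.univ.erase i, b i j * |x i| := by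
      rw [houtdef]; rw [Finset.sum_mul]
    rw [e1, e2]
    refine Finset.sum_le_sum_of_subset_of_nonneg ?_ fun j hj _ => ?_
    · exact Finset.erase_subset_erase i (Finset.subset_univ S)
    · exact mul_nonneg (hbnn i j fun h => (Finset.mem_erase.1 hj).1 h.symm) (abs_nonneg _)
  -- sum it up
  set T : ℝ := ∑ j ∈ S, out j * |x j| with hTdef
  set M : ℝ := ∑ j ∈ S, ∑ i ∈ S, g i j with hMdef
  have hTM : T ≤ M := by
    rw [hTdef, hMdef]
    exact Finset.sum_le_sum fun j hj => le_of_le_of_eq (key1 j hj) (hg1 j hj)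
  have hMT : M ≤ T := by
    rw [hMdef, hTdef, Finset.sum_comm]
    exact Finset.sum_le_sum hg2
  have hMeqT : M = T := le_antisymm hMT hTM
  -- per-column equalities
  have heqcol : ∀ j ∈ S, out j * |x j| = ∑ i ∈ S.erase j, b i j * |x i| := by
    intro j hjS
    have hsum0 : ∑ j ∈ S, (∑ i ∈ S, g i j - out j * |x j|) = 0 := by
      rw [Finset.sum_sub_distrib, ← hMdef, ← hTdef, hMeqT, sub_self]
    have h := (Finset.sum_eq_zero_iff_of_nonneg (fun j hj =>
      sub_nonneg.2 (le_of_le_of_eq (key1 j hj) (hg1 j hj)))).1 hsum0 j hjS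
    have := sub_eq_zero.1 h
    rw [hg1 j hjS, ← this]
  -- per-row equalities: at the exit vertex
  have heqrow : ∀ i ∈ S, out i * |x i| = ∑ j ∈ S, g i j := by
    intro i hiS
    have hM' : ∑ i ∈ S, ∑ j ∈ S, g i j = T := by rw [← Finset.sum_comm, ← hMdef, hMeqT]
    have hsum0 : ∑ i ∈ S, (out i * |x i| - ∑ j ∈ S, g i j) = 0 := by
      rw [Finset.sum_sub_distrib, hM', hTdef, sub_self]
    have h := (Finset.sum_eq_zero_iff_of_nonneg (fun i hi =>
      sub_nonneg.2 (hg2 i hi))).1 hsum0 i hiS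
    linarith [sub_eq_zero.1 h]
  -- x istar = 0
  have hxistar : x istar = 0 := by
    have e1 : ∑ j ∈ S, g istar j = ∑ j ∈ S.erase istar, b istar j * |x istar| := by
      rw [← Finset.add_sum_erase S (fun j => g istar j) histarS]
      have : g istar istar = 0 := by simp [hgdef]
      rw [this, zero_add]
      refine Finset.sum_congr rfl fun j hj => ?_
      have hij : istar ≠ j := fun h => (Finset.mem_erase.1 hj).1 h.symm
      simp [hgdef, hij]
    have hjstar_ne : jstar ≠ istar := fun h => hjstar (h ▸ histar)
    have hjstar_notin : jstar ∉ S.erase istar := by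
      simp [hSdef, Finset.mem_erase]
      intro _; exact hjstar
    have hbpos : 0 < b istar jstar := (hbE istar jstar).1 hedge
    have hsubS : insert jstar (S.erase istar) ⊆ Finset.univ.erase istar := by
      intro k hk
      rcases Finset.mem_insert.1 hk with h | h
      · subst h; exact Finset.mem_erase.2 ⟨hjstar_ne, Finset.mem_univ _⟩
      · exact Finset.mem_erase.2 ⟨(Finset.mem_erase.1 h).1, Finset.mem_univ _⟩
    have hlt : ∑ j ∈ S.erase istar, b istar j < out istar := by
      have h1 : ∑ j ∈ insert jstar (S.erase istar), b istar j ≤ out istar := by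
        rw [houtdef]
        refine Finset.sum_le_sum_of_subset_of_nonneg hsubS fun j hj _ => ?_
        exact hbnn istar j fun h => (Finset.mem_erase.1 hj).1 h.symm
      rw [Finset.sum_insert hjstar_notin] at h1
      linarith
    have heq := heqrow istar histarS
    rw [e1] at heq
    have heq2 : out istar * |x istar| = (∑ j ∈ S.erase istar, b istar j) * |x istar| := by
      rw [heq, Finset.sum_mul]
    have : |x istar| = 0 := by
      by_contra habs
      have habs' : 0 < |x istar| := lt_of_le_of_ne (abs_nonneg _) (Ne.symm habs)
      nlinarith
    exact abs_eq_zero.1 this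
  -- zero propagation backwards along paths to istar
  have hconn_istar : Conn A i1 istar := histar
  have hz : ∀ c : Fin n, Relation.ReflTransGen E c istar → Conn A i1 c → x c = 0 := by
    intro c hci
    refine Relation.ReflTransGen.head_induction_on hci ?_ ?_
    · intro _; exact hxistar
    · intro c' d' hcd hdi ih hc
      have hd : Conn A i1 d' := ⟨hc.1.trans (Relation.ReflTransGen.single hcd),
        hdi.trans hconn_istar.2⟩
      have hxd : x d' = 0 := ih hd
      have hdS : d' ∈ S := by simp [hSdef]; exact hd
      have hcd_ne : c' ≠ d' := fun h => hnoself d' (h ▸ hcd)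
      have hcS : c' ∈ S.erase d' := Finset.mem_erase.2 ⟨hcd_ne, by simp [hSdef]; exact hc⟩
      have heq := heqcol d' hdS
      rw [hxd] at heq
      simp only [abs_zero, mul_zero] at heq
      have hterm := (Finset.sum_eq_zero_iff_of_nonneg (fun i hi =>
        mul_nonneg (hbnn i d' (Finset.mem_erase.1 hi).1) (abs_nonneg _))).1 heq.symm c' hcS
      have hbpos : 0 < b c' d' := (hbE c' d').1 hcd
      have : |x c'| = 0 := by
        by_contra habs
        have : 0 < |x c'| := lt_of_le_of_ne (abs_nonneg _) (Ne.symm habs)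
        nlinarith
      exact abs_eq_zero.1 this
  exact hxi1 (hz i1 hconn_istar.1 (hconn_refl i1))
end

section
/- Let n ≥ 1, let A = (a_{ij}) be a real n×n matrix satisfying the cyclic non-increasing condition, let λ ∈ ℝ, and suppose the vector x ∈ ℝⁿ satisfies Aᵀx = λe, x ≥ 0 (componentwise) and x ≠ 0. Then there exists at least one closed strongly connected component C of the graph 𝒢(A) such that x_i > 0 for every i ∈ C. -/
open Matrix BigOperators

theorem stmt_1 (n : ℕ) [NeZero n] (hn : 1 ≤ n) (A : Matrix (Fin n) (Fin n) ℝ)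
    (hA : CyclicNonIncr A) (lam : ℝ) (x : Fin n → ℝ)
    (hx : Aᵀ.mulVec x = fun _ => lam)
    (hxnonneg : 0 ≤ x) (hxne : x ≠ 0) :
    ∃ C : Set (Fin n), IsClosedSCC A C ∧ ∀ i ∈ C, 0 < x i := by
  classical
  have hcol : ∀ j : Fin n, ∑ i, A i j * x i = lam := by
    intro j
    have := congrFun hx j
    simpa [Matrix.mulVec, Matrix.transpose_apply, dotProduct] using this
  -- the support of x is closed under edges
  have hclosure : ∀ i j : Fin n, 0 < x i → GraphEdge A i j → 0 < x j := by
    intro i j hxi hedge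
    by_contra h
    have hxj : x j = 0 := le_antisymm (not_lt.mp h) (hxnonneg j)
    have hsum : ∑ i', (A i' (j - 1) - A i' j) * x i' = 0 := by
      simp [sub_mul, Finset.sum_sub_distrib, hcol]
    have hpos : 0 < ∑ i', (A i' (j - 1) - A i' j) * x i' := by
      apply Finset.sum_pos'
      · intro i' _
        by_cases hi' : i' = j
        · subst hi'; simp [hxj]
        · exact mul_nonneg (sub_nonneg.mpr (hA i' j fun h' => hi' h'.symm)) (hxnonneg i')
      · exact ⟨i, Finset.mem_univ i, mul_pos (sub_pos.mpr hedge) hxi⟩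
    linarith
  obtain ⟨i0, hi0⟩ : ∃ i, 0 < x i := by
    by_contra h
    push_neg at h
    exact hxne (funext fun i => le_antisymm (h i) (hxnonneg i))
  have hreachpos : ∀ k, Relation.ReflTransGen (GraphEdge A) i0 k → 0 < x k := by
    intro k hk
    induction hk with
    | refl => exact hi0
    | tail _ he ih => exact hclosure _ _ ih he
  set R := Relation.ReflTransGen (GraphEdge A) with hRdef
  let reach : Fin n → Finset (Fin n) := fun j => Finset.univ.filter (R j ·)
  have hmem : ∀ j k, k ∈ reach j ↔ R j k := by intro j k; simp [reach]
  obtain ⟨j, hjT, hjmin⟩ := Finset.exists_min_image (Finset.univ.filter (R i0 ·))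
      (fun k => (reach k).card) ⟨i0, by simp [hRdef, Relation.ReflTransGen.refl]⟩
  have hji0 : R i0 j := by simpa using hjT
  have hmax : ∀ k, R j k → R k j := by
    intro k hk
    have hkT : k ∈ Finset.univ.filter (R i0 ·) := by
      simp only [Finset.mem_filter, Finset.mem_univ, true_and]
      exact hji0.trans hk
    have hsub : reach k ⊆ reach j := by
      intro m hm
      rw [hmem] at hm ⊢
      exact hk.trans hm
    have heq : reach k = reach j := Finset.eq_of_subset_of_card_le hsub (hjmin k hkT)
    have : j ∈ reach k := heq ▸ ((hmem j j).mpr Relation.ReflTransGen.refl)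
    exact (hmem k j).mp this
  refine ⟨{m | Conn A j m}, ⟨⟨j, rfl⟩, ?_⟩, ?_⟩
  · intro i hi j' he
    have hji' : R j j' := hi.1.tail he
    exact ⟨hji', hmax j' hji'⟩
  · intro i hi
    exact hreachpos i (hji0.trans hi.1)
end

section
/- Let n ≥ 1, let A = (a_{ij}) be a real n×n matrix satisfying the cyclic non-increasing condition, let λ ∈ ℝ, let C be a closed strongly connected component of the graph 𝒢(A), and suppose the vector x ∈ ℝⁿ satisfies Aᵀx = λe. Then there exists μ ∈ ℝ such that Σ_{i∈C} a_{ij} x_i = μ for every j ∈ C (that is, [A]ᵀ_{CC}[x]_C is a constant vector). -/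
open Matrix BigOperators

/-!
Put `Q i j = a_{i[j-1]} - a_{ij}`. Each row of `Q` is nonnegative off the diagonal and sums to
zero, its positive entries are exactly the edges of `𝒢(A)`, and `Aᵀx = λe` says `xᵀQ = 0`: `Q` is
the generator of a Markov chain on `𝒢(A)` and `x` a signed stationary measure for it. Such a
measure vanishes at every inessential state, so no mass flows into a closed class `C` from
outside, and hence `[x]_Cᵀ Q` vanishes on all columns. Thus `s_j = Σ_{i∈C} a_{ij} x_i` satisfies
`s_{[j-1]} = s_j`, and is constant.
-/

open Relation

section Reachability

variable {α : Type*} {r : α → α → Prop}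

def IsEssential (r : α → α → Prop) (i : α) : Prop :=
  ∀ j, ReflTransGen r i j → ReflTransGen r j i

lemma IsEssential.of_reflTransGen {i j : α} (hi : IsEssential r i) (hij : ReflTransGen r i j) :
    IsEssential r j :=
  fun k hjk => (hi k (hij.trans hjk)).trans hij

lemma mem_of_reflTransGen_of_closed {s : Set α} (hs : ∀ i ∈ s, ∀ j, r i j → j ∈ s) {i j : α}
    (h : ReflTransGen r i j) (hi : i ∈ s) : j ∈ s := by
  induction h with
  | refl => exact hi
  | tail _ hjk ih => exact hs _ ih _ hjk

/-- A state reaching as few states as possible is essential. -/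
lemma exists_isEssential_of_reflTransGen [Finite α] (i : α) :
    ∃ j, ReflTransGen r i j ∧ IsEssential r j := by
  obtain ⟨j, hij, hmin⟩ := Set.exists_min_image {j | ReflTransGen r i j}
    (fun j => {k | ReflTransGen r j k}.ncard) (Set.toFinite _) ⟨i, .refl⟩
  refine ⟨j, hij, fun k hjk => ?_⟩
  have hsub : {l | ReflTransGen r k l} ⊆ {l | ReflTransGen r j l} := fun _ hkl => hjk.trans hkl
  have heq := Set.eq_of_subset_of_ncard_le hsub (hmin k (hij.trans hjk)) (Set.toFinite _)
  exact (heq ▸ ReflTransGen.refl : j ∈ {l | ReflTransGen r k l})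

end Reachability

section Generator

variable {ι : Type*} [Fintype ι] {Q : Matrix ι ι ℝ} {x : ι → ℝ}

lemma vecMul_apply_le_abs_vecMul_apply (hQ : ∀ i j, i ≠ j → 0 ≤ Q i j) {y : ι → ℝ} {j : ι}
    (hyj : |y j| = y j) : (y ᵥ* Q) j ≤ (|y| ᵥ* Q) j := by
  refine Finset.sum_le_sum fun i _ => ?_
  by_cases hij : i = j
  · subst hij
    rw [Pi.abs_apply, hyj]
  · exact mul_le_mul_of_nonneg_right (le_abs_self _) (hQ i j hij)

lemma abs_vecMul_eq_zero (hQ : ∀ i j, i ≠ j → 0 ≤ Q i j) (hrow : ∀ i, ∑ j, Q i j = 0)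
    (hx : x ᵥ* Q = 0) : |x| ᵥ* Q = 0 := by
  have hnonneg : ∀ j, 0 ≤ (|x| ᵥ* Q) j := by
    intro j
    rcases le_total 0 (x j) with hxj | hxj
    · simpa [hx] using vecMul_apply_le_abs_vecMul_apply hQ (abs_of_nonneg hxj)
    · simpa [neg_vecMul, hx] using
        vecMul_apply_le_abs_vecMul_apply hQ (y := -x) (j := j) (by simpa using abs_of_nonpos hxj)
  have htotal : ∑ j, (|x| ᵥ* Q) j = 0 := by
    simp only [vecMul, dotProduct, Pi.abs_apply]
    rw [Finset.sum_comm]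
    simp [← Finset.mul_sum, hrow]
  funext j
  exact (Finset.sum_eq_zero_iff_of_nonneg fun j _ => hnonneg j).mp htotal j (Finset.mem_univ j)

lemma ne_zero_of_pos_of_ne_zero (hQ : ∀ i j, i ≠ j → 0 ≤ Q i j) (hrow : ∀ i, ∑ j, Q i j = 0)
    (hx : x ᵥ* Q = 0) {i j : ι} (hxi : x i ≠ 0) (hij : 0 < Q i j) : x j ≠ 0 := by
  intro hxj
  have hterms : ∀ k ∈ Finset.univ, 0 ≤ |x k| * Q k j := by
    intro k _
    by_cases hkj : k = j
    · simp [hkj, hxj]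
    · exact mul_nonneg (abs_nonneg _) (hQ k j hkj)
  have hcol := congrFun (abs_vecMul_eq_zero hQ hrow hx) j
  have := (Finset.sum_eq_zero_iff_of_nonneg hterms).mp hcol i (Finset.mem_univ i)
  exact (mul_pos (abs_pos.mpr hxi) hij).ne' this

lemma mem_of_pos_of_ne_zero [DecidableEq ι] (hQ : ∀ i j, i ≠ j → 0 ≤ Q i j)
    (hrow : ∀ i, ∑ j, Q i j = 0) (hx : x ᵥ* Q = 0) {T : Finset ι}
    (hT : ∀ i ∉ T, ∀ j ∈ T, ¬ 0 < Q i j) {i j : ι} (hi : i ∈ T) (hxi : x i ≠ 0)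
    (hij : 0 < Q i j) : j ∈ T := by
  -- Summing `|x|ᵀQ = 0` over the columns in `T`, every row contributes `≤ 0`, hence exactly `0`.
  by_contra hj
  have hsplit : ∀ k, ∑ l ∈ T, Q k l = -∑ l ∈ Tᶜ, Q k l := fun k => by
    linarith [Finset.sum_add_sum_compl T (Q k), hrow k]
  have hinflow : ∀ k ∈ Finset.univ, |x k| * ∑ l ∈ T, Q k l ≤ 0 := by
    intro k _
    refine mul_nonpos_of_nonneg_of_nonpos (abs_nonneg _) ?_
    by_cases hk : k ∈ T
    · rw [hsplit, neg_nonpos]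
      exact Finset.sum_nonneg fun l hl =>
        hQ k l fun hkl => Finset.mem_compl.mp hl (hkl ▸ hk)
    · exact Finset.sum_nonpos fun l hl => not_lt.mp (hT k hk l hl)
  have htotal : ∑ k, |x k| * ∑ l ∈ T, Q k l = 0 := by
    have : ∑ l ∈ T, (|x| ᵥ* Q) l = 0 := by simp [abs_vecMul_eq_zero hQ hrow hx]
    simp only [vecMul, dotProduct, Pi.abs_apply] at this
    rw [Finset.sum_comm] at this
    simpa [Finset.mul_sum] using this
  have hzero := (Finset.sum_eq_zero_iff_of_nonpos hinflow).mp htotal i (Finset.mem_univ i)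
  have houtflow : ∑ l ∈ Tᶜ, Q i l = 0 := by
    rw [hsplit, mul_neg, neg_eq_zero] at hzero
    exact (mul_eq_zero.mp hzero).resolve_left (abs_ne_zero.mpr hxi)
  have := (Finset.sum_eq_zero_iff_of_nonneg fun l hl =>
    hQ i l fun hil => Finset.mem_compl.mp hl (hil ▸ hi)).mp houtflow j (Finset.mem_compl.mpr hj)
  exact hij.ne' this

theorem eq_zero_of_not_isEssential (hQ : ∀ i j, i ≠ j → 0 ≤ Q i j)
    (hrow : ∀ i, ∑ j, Q i j = 0) (hx : x ᵥ* Q = 0) {i : ι}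
    (hi : ¬ IsEssential (0 < Q · ·) i) : x i = 0 := by
  classical
  set T := Finset.univ.filter fun k => ¬ IsEssential (0 < Q · ·) k
  have hT : ∀ k ∉ T, ∀ l ∈ T, ¬ 0 < Q k l := by
    intro k hk l hl hkl
    simp only [T, Finset.mem_filter, Finset.mem_univ, true_and, not_not] at hk hl
    exact hl (hk.of_reflTransGen (.single hkl))
  have hstep : ∀ k ∈ {k | k ∈ T ∧ x k ≠ 0}, ∀ l, 0 < Q k l → l ∈ {k | k ∈ T ∧ x k ≠ 0} :=
    fun k ⟨hkT, hxk⟩ l hkl =>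
      ⟨mem_of_pos_of_ne_zero hQ hrow hx hT hkT hxk hkl,
        ne_zero_of_pos_of_ne_zero hQ hrow hx hxk hkl⟩
  by_contra hxi
  obtain ⟨j, hij, hj⟩ := exists_isEssential_of_reflTransGen (r := (0 < Q · ·)) i
  have hjT := (mem_of_reflTransGen_of_closed hstep hij ⟨by simpa [T] using hi, hxi⟩).1
  simp only [T, Finset.mem_filter, Finset.mem_univ, true_and] at hjT
  exact hjT hj

theorem sum_mul_eq_zero_of_closed (hQ : ∀ i j, i ≠ j → 0 ≤ Q i j)
    (hrow : ∀ i, ∑ j, Q i j = 0) (hx : x ᵥ* Q = 0) {C : Finset ι}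
    (hC : ∀ i ∈ C, ∀ j, 0 < Q i j → j ∈ C) (j : ι) : ∑ i ∈ C, x i * Q i j = 0 := by
  have hoff : ∀ i ∈ C, j ∉ C → Q i j = 0 := fun i hi hj =>
    le_antisymm (not_lt.mp fun hij => hj (hC i hi j hij)) (hQ i j fun h => hj (h ▸ hi))
  by_cases hj : j ∈ C
  · rw [Finset.sum_subset (Finset.subset_univ C)]
    · exact congrFun hx j
    intro i _ hi
    by_cases hxi : x i = 0
    · rw [hxi, zero_mul]
    have hess : IsEssential (0 < Q · ·) i := by
      by_contra h
      exact hxi (eq_zero_of_not_isEssential hQ hrow hx h)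
    have hij : ¬ 0 < Q i j := fun hij =>
      hi (mem_of_reflTransGen_of_closed hC (hess j (.single hij)) hj)
    rw [le_antisymm (not_lt.mp hij) (hQ i j fun h => hi (h ▸ hj)), mul_zero]
  · exact Finset.sum_eq_zero fun i hi => by rw [hoff i hi hj, mul_zero]

end Generator

open Fin.NatCast in
lemma Fin.apply_eq_apply_zero_of_apply_sub_one {n : ℕ} [NeZero n] {β : Type*} {f : Fin n → β}
    (hf : ∀ j, f (j - 1) = f j) (j : Fin n) : f j = f 0 := by
  have hcast : ∀ k : ℕ, f k = f 0 := by
    intro k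
    induction k with
    | zero => simp
    | succ k ih => rw [← hf, Nat.cast_succ, add_sub_cancel_right, ih]
  simpa using hcast j

section CyclicDrop

variable {n : ℕ} [NeZero n]

def cyclicDrop (A : Matrix (Fin n) (Fin n) ℝ) : Matrix (Fin n) (Fin n) ℝ :=
  of fun i j => A i (j - 1) - A i j

variable {A : Matrix (Fin n) (Fin n) ℝ}

lemma cyclicDrop_nonneg (hA : CyclicNonIncr A) (i j : Fin n) (hij : i ≠ j) :
    0 ≤ cyclicDrop A i j :=
  sub_nonneg.mpr (hA i j hij.symm)

lemma sum_cyclicDrop_row (i : Fin n) : ∑ j, cyclicDrop A i j = 0 := by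
  simp only [cyclicDrop, of_apply, Finset.sum_sub_distrib, sub_eq_zero]
  exact (Equiv.subRight 1).sum_comp (A i)

lemma graphEdge_iff_pos_cyclicDrop {i j : Fin n} : GraphEdge A i j ↔ 0 < cyclicDrop A i j :=
  sub_pos.symm

lemma vecMul_cyclicDrop_eq_zero {x : Fin n → ℝ} {lam : ℝ} (hx : Aᵀ *ᵥ x = fun _ => lam) :
    x ᵥ* cyclicDrop A = 0 := by
  rw [mulVec_transpose] at hx
  funext j
  have hcol : ∀ k, ∑ i, x i * A i k = lam := fun k => congrFun hx k
  simp [vecMul, dotProduct, cyclicDrop, mul_sub, hcol]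

end CyclicDrop

theorem stmt_2_general (n : ℕ) [NeZero n] (A : Matrix (Fin n) (Fin n) ℝ)
    (hA : CyclicNonIncr A) (lam : ℝ)
    (C : Finset (Fin n)) (hC : IsClosedSCC A (↑C : Set (Fin n)))
    (x : Fin n → ℝ) (hx : Aᵀ.mulVec x = fun _ => lam) :
    ∃ μ : ℝ, ∀ j ∈ C, ∑ i ∈ C, A i j * x i = μ := by
  have hclosed : ∀ i ∈ C, ∀ j, 0 < cyclicDrop A i j → j ∈ C :=
    fun i hi j hij => hC.2 i hi j (graphEdge_iff_pos_cyclicDrop.mpr hij)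
  have hstat := sum_mul_eq_zero_of_closed (cyclicDrop_nonneg hA) sum_cyclicDrop_row
    (vecMul_cyclicDrop_eq_zero hx) hclosed
  refine ⟨∑ i ∈ C, A i 0 * x i, fun j _ =>
    Fin.apply_eq_apply_zero_of_apply_sub_one (f := fun j => ∑ i ∈ C, A i j * x i) (fun k => ?_) j⟩
  have := hstat k
  simpa only [cyclicDrop, of_apply, mul_comm (x _), sub_mul, Finset.sum_sub_distrib,
    sub_eq_zero] using this

theorem stmt_2 (n : ℕ) [NeZero n] (hn : 1 ≤ n) (A : Matrix (Fin n) (Fin n) ℝ)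
    (hA : CyclicNonIncr A) (lam : ℝ)
    (C : Finset (Fin n)) (hC : IsClosedSCC A (↑C : Set (Fin n)))
    (x : Fin n → ℝ) (hx : Aᵀ.mulVec x = fun _ => lam) :
    ∃ μ : ℝ, ∀ j ∈ C, ∑ i ∈ C, A i j * x i = μ :=
  stmt_2_general n A hA lam C hC x hx
end

section
/- Let n ≥ 1, let A = (a_{ij}) be a real n×n matrix satisfying the cyclic non-increasing condition, let λ ∈ ℝ, let C be a closed strongly connected component of the graph 𝒢(A), and suppose the vector x ∈ ℝⁿ satisfies x_i = 0 for all i ∉ C and Σ_{i∈C} a_{ij} x_i = λ for every j ∈ C. Then Aᵀx = λe. -/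
open Matrix BigOperators

/-!
Write `f j = ∑_{i ∈ C} a_{ij} x_i`. For `i ∈ C` and `j ∉ C` there is no edge `i → j`, so the
cyclic non-increasing condition forces `a_{i[j-1]} = a_{ij}`; hence `f j = f [j-1]` for `j ∉ C`.
Walking cyclically from a vertex of `C`, `f` is therefore `λ` everywhere, and `f = Aᵀx`
because `x` vanishes off `C`.
-/

open Fin.NatCast Fin.CommRing

theorem Fin.eq_of_eq_on_of_eq_apply_sub_one {n : ℕ} [NeZero n] {α : Type*} {f : Fin n → α}
    {C : Set (Fin n)} {c : α} {i₀ : Fin n} (hi₀ : i₀ ∈ C) (hC : ∀ j ∈ C, f j = c)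
    (hstep : ∀ j ∉ C, f j = f (j - 1)) (j : Fin n) : f j = c := by
  have hoffset : ∀ k : ℕ, f (i₀ + k) = c := by
    intro k
    induction k with
    | zero => simpa using hC i₀ hi₀
    | succ k ih =>
      by_cases hk : i₀ + ((k + 1 : ℕ) : Fin n) ∈ C
      · exact hC _ hk
      · rw [hstep _ hk, ← ih]
        push_cast
        ring_nf
  simpa using hoffset (j - i₀).val

theorem IsSCC.nonempty {n : ℕ} [NeZero n] {A : Matrix (Fin n) (Fin n) ℝ} {C : Set (Fin n)}
    (hC : IsSCC A C) : C.Nonempty := by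
  obtain ⟨i, rfl⟩ := hC
  exact ⟨i, .refl, .refl⟩

theorem CyclicNonIncr.apply_eq_apply_sub_one {n : ℕ} [NeZero n]
    {A : Matrix (Fin n) (Fin n) ℝ} (hA : CyclicNonIncr A) {C : Set (Fin n)}
    (hclosed : ∀ i ∈ C, ∀ j, GraphEdge A i j → j ∈ C) {i j : Fin n} (hi : i ∈ C)
    (hj : j ∉ C) : A i j = A i (j - 1) :=
  le_antisymm (hA i j (ne_of_mem_of_not_mem hi hj).symm)
    (not_lt.mp fun hedge => hj (hclosed i hi j hedge))

theorem Matrix.transpose_mulVec_eq_sum_of_support_subset {m n : Type*} [Fintype m]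
    (A : Matrix m n ℝ) {C : Finset m} {x : m → ℝ} (hx : ∀ i ∉ C, x i = 0) (j : n) :
    (Aᵀ *ᵥ x) j = ∑ i ∈ C, A i j * x i := by
  refine (Finset.sum_subset (Finset.subset_univ C) fun i _ hi => ?_).symm
  rw [hx i hi, mul_zero]

theorem stmt_3_general (n : ℕ) [NeZero n] (A : Matrix (Fin n) (Fin n) ℝ)
    (hA : CyclicNonIncr A) (lam : ℝ)
    (C : Finset (Fin n)) (hC : IsClosedSCC A (↑C : Set (Fin n)))
    (x : Fin n → ℝ) (hx0 : ∀ i, i ∉ C → x i = 0)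
    (hxC : ∀ j ∈ C, ∑ i ∈ C, A i j * x i = lam) :
    Aᵀ.mulVec x = fun _ => lam := by
  obtain ⟨hSCC, hclosed⟩ := hC
  obtain ⟨i₀, hi₀⟩ := hSCC.nonempty
  funext j
  rw [A.transpose_mulVec_eq_sum_of_support_subset hx0]
  refine Fin.eq_of_eq_on_of_eq_apply_sub_one hi₀ hxC (fun k hk => ?_) j
  exact Finset.sum_congr rfl fun i hi => by
    rw [hA.apply_eq_apply_sub_one hclosed (Finset.mem_coe.mpr hi) hk]

theorem stmt_3 (n : ℕ) [NeZero n] (hn : 1 ≤ n) (A : Matrix (Fin n) (Fin n) ℝ)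
    (hA : CyclicNonIncr A) (lam : ℝ)
    (C : Finset (Fin n)) (hC : IsClosedSCC A (↑C : Set (Fin n)))
    (x : Fin n → ℝ) (hx0 : ∀ i, i ∉ C → x i = 0)
    (hxC : ∀ j ∈ C, ∑ i ∈ C, A i j * x i = lam) :
    Aᵀ.mulVec x = fun _ => lam :=
  stmt_3_general n A hA lam C hC x hx0 hxC
end

section
/- Let n ≥ 1 and let A = (a_{ij}) be a real n×n matrix satisfying the cyclic non-increasing condition. Suppose the graph 𝒢(A) has exactly k fundamental closed SCCs C_1,…,C_k and exactly ℓ null closed SCCs C_{k+1},…,C_{k+ℓ}, and suppose that for each i = 1,…,k there is a fundamental solution x_i for C_i which is componentwise non-positive or componentwise non-negative. Let λ ∈ ℝ. Then a vector x ∈ ℝⁿ satisfies Aᵀx = λe if and only if x can be written as x = Σ_{i=1}^{k} α_i x_i + Σ_{i=1}^{ℓ} y_{k+i}, where α_1,…,α_k ∈ ℝ with Σ_{i=1}^{k} α_i = λ, and y_{k+i} is a null vector for C_{k+i} for each i = 1,…,ℓ. -/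
open Matrix BigOperators

/-- `x` is a fundamental solution for `C`: it is supported on `C` and solves
`[A]ᵀ_{CC} [x]_C = e_C`. -/
def IsFundSol {n : ℕ} [NeZero n] (A : Matrix (Fin n) (Fin n) ℝ) (C : Finset (Fin n))
    (x : Fin n → ℝ) : Prop :=
  (∀ i, i ∉ C → x i = 0) ∧ ∀ j ∈ C, ∑ i ∈ C, A i j * x i = 1

/-- `y` is a null vector for `C`: it is supported on `C` and
`[A]ᵀ_{CC} [y]_C = 0`. -/
def IsNullVec {n : ℕ} [NeZero n] (A : Matrix (Fin n) (Fin n) ℝ) (C : Finset (Fin n))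
    (y : Fin n → ℝ) : Prop :=
  (∀ i, i ∉ C → y i = 0) ∧ ∀ j ∈ C, ∑ i ∈ C, A i j * y i = 0

/-! Let `D = cyclicDiff A` be the matrix of the differences `a_{i[j-1]} - a_{ij}`. Its
off-diagonal entries are nonnegative, its rows sum to zero and its positive entries are the edges
of `𝒢(A)`: it is the generator of a Markov chain on `𝒢(A)`. Since
`(x ᵥ* D) j = (x ᵥ* A) (j - 1) - (x ᵥ* A) j`, the equation `Aᵀ x = λ e` says that `x` is a
stationary vector of `D` and that `(Aᵀ x) 0 = λ`.

As for Markov chains, `|x|` is then stationary as well; positivity of a nonnegative stationary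
vector propagates along edges, and no mass enters a set without outgoing edges. Hence `x`
vanishes off the closed classes, and its restriction to each closed class is again stationary.
On a closed class the stationary vectors form a line, spanned by any nonzero nonnegative one
(subtract the largest multiple lying below): the fundamental solution on a fundamental class.
On a null class the restriction has `Aᵀ`-image a constant `c`, and `c ≠ 0` would turn it into a
fundamental solution. -/

open Finset

lemma Relation.ReflTransGen.exists_crossing {α : Type*} {r : α → α → Prop} {p : α → Prop}
    {a b : α} (h : Relation.ReflTransGen r a b) (ha : ¬ p a) (hb : p b) :
    ∃ c d, Relation.ReflTransGen r a c ∧ r c d ∧ ¬ p c ∧ p d := by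
  induction h with
  | refl => exact absurd hb ha
  | @tail c d hac hcd ih =>
    by_cases hc : p c
    · exact ih hc
    · exact ⟨c, d, hac, hcd, hc, hb⟩

lemma Matrix.vecMul_apply_eq_sum_of_support {m ι : Type*} [Fintype m] {M : Matrix m ι ℝ}
    {C : Finset m} {z : m → ℝ} (hz : ∀ i, i ∉ C → z i = 0) (j : ι) :
    (z ᵥ* M) j = ∑ i ∈ C, M i j * z i := by
  rw [Matrix.vecMul_apply_eq_sum, ← sum_subset (subset_univ C) fun i _ hi => by
    rw [hz i hi, zero_mul]]
  exact sum_congr rfl fun i _ => mul_comm _ _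

section Cyclic

open Fin.NatCast Fin.CommRing

variable {n : ℕ} [NeZero n]

lemma Fin.eq_of_forall_eq_or_eq_sub_one {α : Type*} {g : Fin n → α} {b : Fin n} {c : α}
    (hb : g b = c) (h : ∀ j, g j = c ∨ g j = g (j - 1)) (j : Fin n) : g j = c := by
  have key : ∀ t : ℕ, g (b + t) = c := by
    intro t
    induction t with
    | zero => simpa using hb
    | succ t ih =>
      refine (h _).elim id fun h' => h'.trans ?_
      convert ih using 2
      push_cast
      ring
  simpa using key (j - b).val

lemma Fin.sum_sub_one_sub (g : Fin n → ℝ) : ∑ j, (g (j - 1) - g j) = 0 := by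
  rw [sum_sub_distrib]
  exact sub_eq_zero.2 (Equiv.sum_comp (Equiv.subRight 1) g)

end Cyclic

variable {n : ℕ} [NeZero n] {A : Matrix (Fin n) (Fin n) ℝ}

lemma Conn.refl (i : Fin n) : Conn A i i := ⟨.refl, .refl⟩

lemma Conn.symm {i j : Fin n} (h : Conn A i j) : Conn A j i := ⟨h.2, h.1⟩

lemma Conn.trans {i j m : Fin n} (h : Conn A i j) (h' : Conn A j m) : Conn A i m :=
  ⟨h.1.trans h'.1, h'.2.trans h.2⟩

lemma IsSCC.mem_iff {S : Set (Fin n)} (hS : IsSCC A S) {i j : Fin n} (hi : i ∈ S) :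
    j ∈ S ↔ Conn A i j := by
  obtain ⟨b, rfl⟩ := hS
  exact ⟨fun hj => (Conn.symm hi).trans hj, fun hj => Conn.trans hi hj⟩

lemma IsSCC.nonempty_s4 {S : Set (Fin n)} (hS : IsSCC A S) : S.Nonempty := by
  obtain ⟨b, rfl⟩ := hS
  exact ⟨b, Conn.refl b⟩

lemma IsSCC.disjoint {S T : Set (Fin n)} (hS : IsSCC A S) (hT : IsSCC A T) (hne : S ≠ T) :
    Disjoint S T := by
  refine Set.disjoint_left.2 fun i hiS hiT => hne (Set.ext fun j => ?_)
  rw [hS.mem_iff hiS, hT.mem_iff hiT]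

def cyclicDiff (A : Matrix (Fin n) (Fin n) ℝ) : Matrix (Fin n) (Fin n) ℝ :=
  Matrix.of fun i j => A i (j - 1) - A i j

@[simp]
lemma cyclicDiff_apply (i j : Fin n) : cyclicDiff A i j = A i (j - 1) - A i j := rfl

lemma graphEdge_iff {i j : Fin n} : GraphEdge A i j ↔ 0 < cyclicDiff A i j := sub_pos.symm

lemma cyclicDiff_nonneg (hA : CyclicNonIncr A) {i j : Fin n} (h : j ≠ i) :
    0 ≤ cyclicDiff A i j :=
  sub_nonneg.2 (hA i j h)

lemma cyclicDiff_eq_zero (hA : CyclicNonIncr A) {i j : Fin n} (h : j ≠ i)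
    (hij : ¬ GraphEdge A i j) : cyclicDiff A i j = 0 :=
  (cyclicDiff_nonneg hA h).antisymm' (not_lt.1 (graphEdge_iff.not.1 hij))

lemma sum_cyclicDiff_row (i : Fin n) : ∑ j, cyclicDiff A i j = 0 :=
  Fin.sum_sub_one_sub (A i)

lemma vecMul_cyclicDiff_apply (x : Fin n → ℝ) (j : Fin n) :
    (x ᵥ* cyclicDiff A) j = (x ᵥ* A) (j - 1) - (x ᵥ* A) j := by
  simp [Matrix.vecMul, dotProduct, mul_sub]

lemma sum_vecMul_cyclicDiff (x : Fin n → ℝ) : ∑ j, (x ᵥ* cyclicDiff A) j = 0 := by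
  simp only [vecMul_cyclicDiff_apply, Fin.sum_sub_one_sub]

lemma vecMul_cyclicDiff_eq_zero_of_eq_const {x : Fin n → ℝ} {c : ℝ}
    (hx : x ᵥ* A = fun _ => c) : x ᵥ* cyclicDiff A = 0 := by
  ext j
  simp [vecMul_cyclicDiff_apply, hx]

lemma vecMul_eq_const_of_vecMul_cyclicDiff_eq_zero {x : Fin n → ℝ}
    (hx : x ᵥ* cyclicDiff A = 0) : x ᵥ* A = fun _ => (x ᵥ* A) 0 := by
  ext j
  refine Fin.eq_of_forall_eq_or_eq_sub_one (g := x ᵥ* A) rfl (fun j => .inr ?_) j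
  have hj := congrFun hx j
  rw [vecMul_cyclicDiff_apply, Pi.zero_apply, sub_eq_zero] at hj
  exact hj.symm

lemma pos_of_graphEdge (hA : CyclicNonIncr A) {u : Fin n → ℝ} (hu : ∀ i, 0 ≤ u i)
    (hD : u ᵥ* cyclicDiff A = 0) {i j : Fin n} (hi : 0 < u i) (hij : GraphEdge A i j) :
    0 < u j := by
  rcases eq_or_ne i j with rfl | hne
  · exact hi
  have hsum := congrFun hD j
  rw [Matrix.vecMul_apply_eq_sum, Pi.zero_apply, ← add_sum_erase _ _ (mem_univ j)] at hsum
  have hle : u i * cyclicDiff A i j ≤ ∑ m ∈ univ.erase j, u m * cyclicDiff A m j :=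
    single_le_sum (fun m hm => mul_nonneg (hu m) (cyclicDiff_nonneg hA (ne_of_mem_erase hm).symm))
      (mem_erase.2 ⟨hne, mem_univ i⟩)
  have hpos : 0 < u i * cyclicDiff A i j := mul_pos hi (graphEdge_iff.1 hij)
  refine (hu j).lt_of_ne fun h => ?_
  rw [← h, zero_mul] at hsum
  linarith

lemma pos_of_reflTransGen (hA : CyclicNonIncr A) {u : Fin n → ℝ} (hu : ∀ i, 0 ≤ u i)
    (hD : u ᵥ* cyclicDiff A = 0) {i j : Fin n} (hi : 0 < u i)
    (hij : Relation.ReflTransGen (GraphEdge A) i j) : 0 < u j := by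
  induction hij with
  | refl => exact hi
  | tail _ hedge ih => exact pos_of_graphEdge hA hu hD ih hedge

/-- Summed over `T`, the equations `u ᵥ* cyclicDiff A = 0` say that no mass flows into `T`
from outside. -/
lemma eq_zero_of_graphEdge_into (hA : CyclicNonIncr A) {u : Fin n → ℝ} (hu : ∀ i, 0 ≤ u i)
    (hD : u ᵥ* cyclicDiff A = 0) {T : Finset (Fin n)}
    (hT : ∀ i ∈ T, ∀ j, GraphEdge A i j → j ∈ T) {i j : Fin n} (hi : i ∉ T) (hj : j ∈ T)
    (hij : GraphEdge A i j) : u i = 0 := by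
  have hrow : ∀ m ∈ T, ∑ j ∈ T, cyclicDiff A m j = 0 := fun m hm =>
    (sum_subset (subset_univ T) fun j _ hjT => cyclicDiff_eq_zero hA
      (ne_of_mem_of_not_mem hm hjT).symm fun hmj => hjT (hT m hm j hmj)).trans
      (sum_cyclicDiff_row m)
  have hnn : ∀ m ∈ univ, 0 ≤ u m * ∑ j ∈ T, cyclicDiff A m j := by
    intro m _
    by_cases hm : m ∈ T
    · rw [hrow m hm, mul_zero]
    · exact mul_nonneg (hu m) (sum_nonneg fun j hj =>
        cyclicDiff_nonneg hA (ne_of_mem_of_not_mem hj hm))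
  have htot : ∑ m, u m * ∑ j ∈ T, cyclicDiff A m j = 0 := by
    simp_rw [mul_sum]
    rw [sum_comm]
    exact sum_eq_zero fun j _ => congrFun hD j
  have hi0 := (sum_eq_zero_iff_of_nonneg hnn).1 htot i (mem_univ i)
  have hpos : 0 < ∑ j ∈ T, cyclicDiff A i j :=
    (graphEdge_iff.1 hij).trans_le (single_le_sum (fun m hm => cyclicDiff_nonneg hA
      (ne_of_mem_of_not_mem hm hi)) hj)
  exact (mul_eq_zero.1 hi0).resolve_right hpos.ne'

lemma reflTransGen_symm_of_pos (hA : CyclicNonIncr A) {u : Fin n → ℝ} (hu : ∀ i, 0 ≤ u i)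
    (hD : u ᵥ* cyclicDiff A = 0) {i j : Fin n} (hi : 0 < u i)
    (hij : Relation.ReflTransGen (GraphEdge A) i j) :
    Relation.ReflTransGen (GraphEdge A) j i := by
  classical
  by_contra hji
  set T := univ.filter (Relation.ReflTransGen (GraphEdge A) j)
  have hT : ∀ a ∈ T, ∀ b, GraphEdge A a b → b ∈ T := by
    simp only [T, mem_filter, mem_univ, true_and]
    exact fun a ha b hab => ha.tail hab
  obtain ⟨c, d, hic, hcd, hc, hd⟩ := hij.exists_crossing (p := (· ∈ T))
    (by simpa [T] using hji) (mem_filter.2 ⟨mem_univ j, .refl⟩)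
  exact (pos_of_reflTransGen hA hu hD hi hic).ne' (eq_zero_of_graphEdge_into hA hu hD hT hc hd hcd)

lemma abs_vecMul_cyclicDiff_eq_zero (hA : CyclicNonIncr A) {x : Fin n → ℝ}
    (hx : x ᵥ* cyclicDiff A = 0) : |x| ᵥ* cyclicDiff A = 0 := by
  have hnn : ∀ j ∈ univ, 0 ≤ (|x| ᵥ* cyclicDiff A) j := by
    intro j _
    have hj := congrFun hx j
    rw [Matrix.vecMul_apply_eq_sum, Pi.zero_apply, ← add_sum_erase _ _ (mem_univ j)] at hj
    rw [Matrix.vecMul_apply_eq_sum, ← add_sum_erase _ _ (mem_univ j)]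
    have hrest : |x j * cyclicDiff A j j| ≤
        ∑ i ∈ univ.erase j, |x| i * cyclicDiff A i j := by
      rw [eq_neg_of_add_eq_zero_left hj, abs_neg]
      refine (abs_sum_le_sum_abs _ _).trans (sum_le_sum fun i hi => ?_)
      rw [abs_mul, Pi.abs_apply, abs_of_nonneg (cyclicDiff_nonneg hA (ne_of_mem_erase hi).symm)]
    have hdiag : -|x j * cyclicDiff A j j| ≤ |x| j * cyclicDiff A j j := by
      rw [abs_mul, Pi.abs_apply, neg_mul_eq_mul_neg]
      exact mul_le_mul_of_nonneg_left (neg_abs_le _) (abs_nonneg _)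
    linarith
  ext j
  exact (sum_eq_zero_iff_of_nonneg hnn).1 (sum_vecMul_cyclicDiff _) j (mem_univ j)

lemma reflTransGen_symm_of_ne_zero (hA : CyclicNonIncr A) {x : Fin n → ℝ}
    (hx : x ᵥ* cyclicDiff A = 0) {i j : Fin n} (hi : x i ≠ 0)
    (hij : Relation.ReflTransGen (GraphEdge A) i j) :
    Relation.ReflTransGen (GraphEdge A) j i :=
  reflTransGen_symm_of_pos hA (fun i => abs_nonneg (x i)) (abs_vecMul_cyclicDiff_eq_zero hA hx)
    (abs_pos.2 hi) hij

lemma isClosedSCC_of_ne_zero (hA : CyclicNonIncr A) {x : Fin n → ℝ}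
    (hx : x ᵥ* cyclicDiff A = 0) {j : Fin n} (hj : x j ≠ 0) :
    IsClosedSCC A {k | Conn A j k} :=
  ⟨⟨j, rfl⟩, fun _ hi _ him =>
    ⟨hi.1.tail him, reflTransGen_symm_of_ne_zero hA hx hj (hi.1.tail him)⟩⟩

lemma IsSCC.mem_iff_mem_of_mul_ne_zero (hA : CyclicNonIncr A) {x : Fin n → ℝ}
    (hx : x ᵥ* cyclicDiff A = 0) {S : Set (Fin n)} (hS : IsSCC A S) {i j : Fin n}
    (h : x i * cyclicDiff A i j ≠ 0) : i ∈ S ↔ j ∈ S := by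
  rcases eq_or_ne j i with rfl | hne
  · rfl
  have hedge : GraphEdge A i j :=
    graphEdge_iff.2 ((cyclicDiff_nonneg hA hne).lt_of_ne' (right_ne_zero_of_mul h))
  have hconn : Conn A i j :=
    ⟨.single hedge, reflTransGen_symm_of_ne_zero hA hx (left_ne_zero_of_mul h) (.single hedge)⟩
  exact ⟨fun hi => (hS.mem_iff hi).2 hconn, fun hj => (hS.mem_iff hj).2 hconn.symm⟩

lemma indicator_vecMul_cyclicDiff_eq_zero (hA : CyclicNonIncr A) {x : Fin n → ℝ}
    (hx : x ᵥ* cyclicDiff A = 0) {S : Set (Fin n)} (hS : IsSCC A S) :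
    S.indicator x ᵥ* cyclicDiff A = 0 := by
  classical
  ext j
  have hterm : ∀ i, S.indicator x i * cyclicDiff A i j =
      if j ∈ S then x i * cyclicDiff A i j else 0 := by
    intro i
    by_cases h : x i * cyclicDiff A i j = 0
    · rw [h, ite_self]
      by_cases hi : i ∈ S
      · rw [Set.indicator_of_mem hi, h]
      · rw [Set.indicator_of_notMem hi, zero_mul]
    · by_cases hi : i ∈ S <;> simp [hi, ← hS.mem_iff_mem_of_mul_ne_zero hA hx h]
  rw [Matrix.vecMul_apply_eq_sum, sum_congr rfl fun i _ => hterm i]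
  split_ifs
  · exact congrFun hx j
  · simp

lemma vecMul_eq_const_of_support (hA : CyclicNonIncr A) {C : Finset (Fin n)}
    (hC : IsClosedSCC A ↑C) {z : Fin n → ℝ} (hz : ∀ i, i ∉ C → z i = 0) {c : ℝ}
    (h : ∀ j ∈ C, (z ᵥ* A) j = c) : z ᵥ* A = fun _ => c := by
  obtain ⟨b, hb⟩ := hC.1.nonempty_s4
  ext j
  refine Fin.eq_of_forall_eq_or_eq_sub_one (h b hb) (fun j => ?_) j
  by_cases hj : j ∈ C
  · exact .inl (h j hj)
  refine .inr (sub_eq_zero.1 ?_).symm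
  rw [← vecMul_cyclicDiff_apply, Matrix.vecMul_apply_eq_sum]
  refine sum_eq_zero fun i _ => ?_
  by_cases hi : i ∈ C
  · rw [cyclicDiff_eq_zero hA (ne_of_mem_of_not_mem hi hj).symm fun hij => hj (hC.2 i hi j hij),
      mul_zero]
  · rw [hz i hi, zero_mul]

lemma IsFundSol.vecMul_eq_one (hA : CyclicNonIncr A) {C : Finset (Fin n)}
    (hC : IsClosedSCC A ↑C) {x : Fin n → ℝ} (hx : IsFundSol A C x) : x ᵥ* A = fun _ => 1 :=
  vecMul_eq_const_of_support hA hC hx.1 fun j hj =>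
    (Matrix.vecMul_apply_eq_sum_of_support hx.1 j).trans (hx.2 j hj)

lemma IsNullVec.vecMul_eq_zero (hA : CyclicNonIncr A) {C : Finset (Fin n)}
    (hC : IsClosedSCC A ↑C) {y : Fin n → ℝ} (hy : IsNullVec A C y) : y ᵥ* A = fun _ => 0 :=
  vecMul_eq_const_of_support hA hC hy.1 fun j hj =>
    (Matrix.vecMul_apply_eq_sum_of_support hy.1 j).trans (hy.2 j hj)

lemma isNullVec_of_vecMul_cyclicDiff_eq_zero {C : Finset (Fin n)}
    (hnull : ¬ ∃ y, IsFundSol A C y) {z : Fin n → ℝ}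
    (hz : ∀ i, i ∉ C → z i = 0) (hD : z ᵥ* cyclicDiff A = 0) : IsNullVec A C z := by
  have hconst := vecMul_eq_const_of_vecMul_cyclicDiff_eq_zero hD
  set c := (z ᵥ* A) 0
  have hc : c = 0 := by
    by_contra hc
    have hcz : ∀ i, i ∉ C → (c⁻¹ • z) i = 0 := fun i hi => by simp [hz i hi]
    refine hnull ⟨c⁻¹ • z, hcz, fun j _ => ?_⟩
    rw [← Matrix.vecMul_apply_eq_sum_of_support hcz, Matrix.smul_vecMul, hconst]
    simp [hc]
  refine ⟨hz, fun j _ => ?_⟩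
  rw [← Matrix.vecMul_apply_eq_sum_of_support hz, hconst, hc]

lemma eq_zero_of_nonneg_of_eq_zero (hA : CyclicNonIncr A) {S : Set (Fin n)} (hS : IsSCC A S)
    {u : Fin n → ℝ} (hu : ∀ i, 0 ≤ u i) (hD : u ᵥ* cyclicDiff A = 0) {i₀ i : Fin n}
    (hi₀ : i₀ ∈ S) (h₀ : u i₀ = 0) (hi : i ∈ S) : u i = 0 :=
  (hu i).antisymm' <| not_lt.1 fun hpos =>
    (pos_of_reflTransGen hA hu hD hpos ((hS.mem_iff hi).1 hi₀).1).ne' h₀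

lemma exists_eq_smul_of_nonneg (hA : CyclicNonIncr A) {C : Finset (Fin n)} (hC : IsSCC A ↑C)
    {w z : Fin n → ℝ} (hw : ∀ i, 0 ≤ w i) (hw₀ : w ≠ 0) (hwC : ∀ i, i ∉ C → w i = 0)
    (hwD : w ᵥ* cyclicDiff A = 0) (hzC : ∀ i, i ∉ C → z i = 0)
    (hzD : z ᵥ* cyclicDiff A = 0) : ∃ t : ℝ, z = t • w := by
  have hwpos : ∀ i ∈ C, 0 < w i := by
    intro i hi
    refine (hw i).lt_of_ne' fun h => hw₀ (funext fun m => ?_)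
    by_cases hm : m ∈ C
    · exact eq_zero_of_nonneg_of_eq_zero hA hC hw hwD hi h hm
    · exact hwC m hm
  obtain ⟨b, hb⟩ := hC.nonempty_s4
  obtain ⟨m, hm, hmax⟩ := exists_max_image C (fun i => z i / w i) ⟨b, hb⟩
  set t := z m / w m
  -- `t` is the largest ratio `z i / w i`, so `t • w - z` is a nonnegative solution vanishing
  -- at `m`.
  have hv : ∀ i, 0 ≤ (t • w - z) i := by
    intro i
    by_cases hi : i ∈ C
    · have := (div_le_iff₀ (hwpos i hi)).1 (hmax i hi)
      simp only [Pi.sub_apply, Pi.smul_apply, smul_eq_mul]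
      linarith
    · simp [hwC i hi, hzC i hi]
  have hvD : (t • w - z) ᵥ* cyclicDiff A = 0 := by
    rw [Matrix.sub_vecMul, Matrix.smul_vecMul, hwD, hzD, smul_zero, sub_zero]
  have hvm : (t • w - z) m = 0 := by
    simp [t, div_mul_cancel₀ _ (hwpos m hm).ne']
  refine ⟨t, funext fun i => ?_⟩
  by_cases hi : i ∈ C
  · have := eq_zero_of_nonneg_of_eq_zero hA hC hv hvD hm hvm hi
    simp only [Pi.sub_apply, Pi.smul_apply, smul_eq_mul] at this ⊢
    linarith
  · simp [hwC i hi, hzC i hi]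

lemma IsFundSol.exists_eq_smul (hA : CyclicNonIncr A) {C : Finset (Fin n)}
    (hC : IsClosedSCC A ↑C) {x : Fin n → ℝ} (hx : IsFundSol A C x)
    (hsign : (∀ j, x j ≤ 0) ∨ (∀ j, 0 ≤ x j)) {z : Fin n → ℝ} (hzC : ∀ i, i ∉ C → z i = 0)
    (hzD : z ᵥ* cyclicDiff A = 0) : ∃ α : ℝ, z = α • x := by
  have hxA := hx.vecMul_eq_one hA hC
  have hxD : x ᵥ* cyclicDiff A = 0 := vecMul_cyclicDiff_eq_zero_of_eq_const hxA
  have hx₀ : x ≠ 0 := by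
    rintro rfl
    simpa using congrFun hxA 0
  rcases hsign with hneg | hpos
  · obtain ⟨t, ht⟩ := exists_eq_smul_of_nonneg hA hC.1 (w := -x) (fun i => neg_nonneg.2 (hneg i))
      (neg_ne_zero.2 hx₀) (fun i hi => by simp [hx.1 i hi])
      (by rw [Matrix.neg_vecMul, hxD, neg_zero]) hzC hzD
    exact ⟨-t, by rw [ht, smul_neg, neg_smul]⟩
  · exact exists_eq_smul_of_nonneg hA hC.1 hpos hx₀ hx.1 hxD hzC hzD

lemma eq_sum_indicator_of_isClosedSCC (hA : CyclicNonIncr A) {x : Fin n → ℝ}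
    (hx : x ᵥ* cyclicDiff A = 0) {ι : Type*} [Fintype ι] {C : ι → Finset (Fin n)}
    (hC : ∀ c, IsClosedSCC A ↑(C c)) (hinj : Function.Injective C)
    (hall : ∀ S : Finset (Fin n), IsClosedSCC A ↑S → ∃ c, S = C c) :
    x = ∑ c, (↑(C c) : Set (Fin n)).indicator x := by
  have hdisj : (↑(univ : Finset ι) : Set ι).PairwiseDisjoint fun c => (↑(C c) : Set (Fin n)) :=
    fun c _ c' _ hne => (hC c).1.disjoint (hC c').1 (Finset.coe_injective.ne (hinj.ne hne))
  have hsupp : Function.support x ⊆ ⋃ c ∈ univ, ↑(C c) := by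
    intro j hj
    have hcl := isClosedSCC_of_ne_zero hA hx hj
    obtain ⟨c, hc⟩ := hall (Set.toFinite _).toFinset (by rwa [Set.Finite.coe_toFinset])
    simp only [Set.mem_iUnion]
    exact ⟨c, mem_univ c, by simpa [← hc] using Conn.refl j⟩
  conv_lhs => rw [← Set.indicator_eq_self.2 hsupp, indicator_biUnion _ _ hdisj]
  ext j
  simp [Finset.sum_apply]

lemma vecMul_sum_smul_add_sum (hA : CyclicNonIncr A) {ι κ : Type*} [Fintype ι] [Fintype κ]
    {Cf : ι → Finset (Fin n)} {Cn : κ → Finset (Fin n)} (hCf : ∀ i, IsClosedSCC A ↑(Cf i))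
    (hCn : ∀ i, IsClosedSCC A ↑(Cn i)) {xf : ι → Fin n → ℝ} (hxf : ∀ i, IsFundSol A (Cf i) (xf i))
    {y : κ → Fin n → ℝ} (hy : ∀ i, IsNullVec A (Cn i) (y i)) (α : ι → ℝ) :
    ((∑ i, α i • xf i) + ∑ i, y i) ᵥ* A = fun _ => ∑ i, α i := by
  ext j
  simp [Matrix.add_vecMul, Matrix.sum_vecMul, Matrix.smul_vecMul,
    fun i => (hxf i).vecMul_eq_one hA (hCf i), fun i => (hy i).vecMul_eq_zero hA (hCn i)]

theorem stmt_4_general (n : ℕ) [NeZero n] (A : Matrix (Fin n) (Fin n) ℝ)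
    (hA : CyclicNonIncr A) (k l : ℕ)
    (Cf : Fin k → Finset (Fin n)) (Cn : Fin l → Finset (Fin n))
    (hCfinj : Function.Injective Cf) (hCninj : Function.Injective Cn)
    (hCfSCC : ∀ i, IsClosedSCC A (↑(Cf i) : Set (Fin n)))
    (hCnSCC : ∀ i, IsClosedSCC A (↑(Cn i) : Set (Fin n)))
    (hCnNull : ∀ i, ¬ ∃ y, IsFundSol A (Cn i) y)
    (hall : ∀ C : Finset (Fin n), IsClosedSCC A (↑C : Set (Fin n)) →
      (∃ i, C = Cf i) ∨ (∃ i, C = Cn i))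
    (xf : Fin k → Fin n → ℝ)
    (hxf : ∀ i, IsFundSol A (Cf i) (xf i))
    (hsign : ∀ i, (∀ j, xf i j ≤ 0) ∨ (∀ j, 0 ≤ xf i j))
    (lam : ℝ) (x : Fin n → ℝ) :
    Aᵀ.mulVec x = (fun _ => lam) ↔
      ∃ (α : Fin k → ℝ) (y : Fin l → Fin n → ℝ),
        (∑ i, α i = lam) ∧ (∀ i, IsNullVec A (Cn i) (y i)) ∧
        x = (∑ i, α i • xf i) + ∑ i, y i := by
  rw [Matrix.mulVec_transpose]
  constructor
  · intro hx
    have hD := vecMul_cyclicDiff_eq_zero_of_eq_const hx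
    have hsupp (C : Finset (Fin n)) (i : Fin n) (hi : i ∉ C) :
        (↑C : Set (Fin n)).indicator x i = 0 :=
      Set.indicator_of_notMem hi x
    choose α hα using fun i => (hxf i).exists_eq_smul hA (hCfSCC i) (hsign i) (hsupp _)
      (indicator_vecMul_cyclicDiff_eq_zero hA hD (hCfSCC i).1)
    have hy (i : Fin l) : IsNullVec A (Cn i) ((↑(Cn i) : Set (Fin n)).indicator x) :=
      isNullVec_of_vecMul_cyclicDiff_eq_zero (hCnNull i) (hsupp _)
        (indicator_vecMul_cyclicDiff_eq_zero hA hD (hCnSCC i).1)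
    have hdecomp : x = (∑ i, α i • xf i) + ∑ i, (↑(Cn i) : Set (Fin n)).indicator x := by
      have hinj : (Sum.elim Cf Cn).Injective :=
        hCfinj.sumElim hCninj fun i j h => hCnNull j (h ▸ ⟨xf i, hxf i⟩)
      refine (eq_sum_indicator_of_isClosedSCC hA hD (Sum.forall.2 ⟨hCfSCC, hCnSCC⟩) hinj
        fun S hS => (hall S hS).elim (fun ⟨i, h⟩ => ⟨.inl i, h⟩) fun ⟨i, h⟩ => ⟨.inr i, h⟩).trans ?_
      simp only [Fintype.sum_sum_type, Sum.elim_inl, Sum.elim_inr, hα]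
    refine ⟨α, _, ?_, hy, hdecomp⟩
    have h0 := congrFun (vecMul_sum_smul_add_sum hA hCfSCC hCnSCC hxf hy α) 0
    rw [← hdecomp, hx] at h0
    exact h0.symm
  · rintro ⟨α, y, rfl, hy, rfl⟩
    exact vecMul_sum_smul_add_sum hA hCfSCC hCnSCC hxf hy α

theorem stmt_4 (n : ℕ) [NeZero n] (hn : 1 ≤ n) (A : Matrix (Fin n) (Fin n) ℝ)
    (hA : CyclicNonIncr A) (k l : ℕ)
    (Cf : Fin k → Finset (Fin n)) (Cn : Fin l → Finset (Fin n))
    (hCfinj : Function.Injective Cf) (hCninj : Function.Injective Cn)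
    (hCfSCC : ∀ i, IsClosedSCC A (↑(Cf i) : Set (Fin n)))
    (hCnSCC : ∀ i, IsClosedSCC A (↑(Cn i) : Set (Fin n)))
    (hCfFund : ∀ i, ∃ y, IsFundSol A (Cf i) y)
    (hCnNull : ∀ i, ¬ ∃ y, IsFundSol A (Cn i) y)
    (hall : ∀ C : Finset (Fin n), IsClosedSCC A (↑C : Set (Fin n)) →
      (∃ i, C = Cf i) ∨ (∃ i, C = Cn i))
    (xf : Fin k → Fin n → ℝ)
    (hxf : ∀ i, IsFundSol A (Cf i) (xf i))
    (hsign : ∀ i, (∀ j, xf i j ≤ 0) ∨ (∀ j, 0 ≤ xf i j))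
    (lam : ℝ) (x : Fin n → ℝ) :
    Aᵀ.mulVec x = (fun _ => lam) ↔
      ∃ (α : Fin k → ℝ) (y : Fin l → Fin n → ℝ),
        (∑ i, α i = lam) ∧ (∀ i, IsNullVec A (Cn i) (y i)) ∧
        x = (∑ i, α i • xf i) + ∑ i, y i :=
  stmt_4_general n A hA k l Cf Cn hCfinj hCninj hCfSCC hCnSCC hCnNull hall xf hxf hsign lam x
end

section
/- Let n ≥ 1 and let A be a real n×n matrix satisfying the cyclic non-increasing condition such that Ae > 0 (all row sums strictly positive). Then (i) every vector z ∈ ℝⁿ with Az = 0 satisfies eᵀz = 0, and (ii) the system Aᵀx = e has a solution x with x ≥ 0 componentwise. -/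
open Matrix BigOperators

/-! For every `z` there is a row `i` with `n (A z)ᵢ ≤ (∑ z) (A e)ᵢ`. After subtracting the mean,
this says that a zero-sum vector `w` has `(A w)ᵢ ≤ 0` for some `i`: start the cyclic order just
after a maximum of the prefix sums of `w`, so that all cyclic prefix sums from `i` are `≤ 0`, and
Abel summation against the cyclically non-increasing row `i` gives `(A w)ᵢ ≤ 0`.
Part (i) follows by applying this to `± z`. Part (ii) is Farkas' lemma: if `e` is not a
nonnegative combination of the rows, separating the compact set `{yᵀ A : y ∈ simplex}` from the
ray `ℝ≥0 e` yields `z` with `A z < 0` and `∑ z ≥ 0`, which the above excludes. -/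

open Finset Fin.NatCast

lemma sum_range_mul_nonpos_of_antitone {n : ℕ} {b c : ℕ → ℝ}
    (hb : ∀ k, k + 1 < n → b (k + 1) ≤ b k) (hc : ∀ k ≤ n, ∑ m ∈ range k, c m ≤ 0)
    (hc0 : ∑ m ∈ range n, c m = 0) :
    ∑ m ∈ range n, b m * c m ≤ 0 := by
  have h := sum_range_by_parts b c n
  simp only [smul_eq_mul] at h
  rw [h, hc0, mul_zero, zero_sub, neg_nonpos]
  refine sum_nonneg fun k hk => ?_
  have hk : k + 1 < n := by rw [mem_range] at hk; omega
  exact mul_nonneg_of_nonpos_of_nonpos (sub_nonpos.2 (hb k hk)) (hc (k + 1) hk.le)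

lemma Fin.sum_univ_eq_sum_range_add {M : Type*} [AddCommMonoid M] {n : ℕ} [NeZero n]
    (g : Fin n → M) (i : Fin n) :
    ∑ j, g j = ∑ k ∈ range n, g (i + k) := by
  rw [← Fin.sum_univ_eq_sum_range (fun k => g (i + k)) n]
  simp only [Fin.cast_val_eq_self]
  exact (Fintype.sum_equiv (Equiv.addLeft i) _ _ fun j => rfl).symm

lemma Fin.exists_forall_sum_range_add_nonpos {n : ℕ} [NeZero n] (w : Fin n → ℝ)
    (hw : ∑ j, w j = 0) :
    ∃ i : Fin n, ∀ k, ∑ m ∈ range k, w (i + m) ≤ 0 := by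
  set F : ℕ → ℝ := fun k => ∑ m ∈ range k, w m
  have hshift : ∀ a k : ℕ, ∑ m ∈ range k, w ((a : Fin n) + m) = F (a + k) - F a := by
    intro a k
    simp only [F, sum_range_add, Nat.cast_add]
    ring
  have hper : ∀ a, F (a + n) = F a := fun a => by
    have := hshift a n
    rw [← Fin.sum_univ_eq_sum_range_add, hw] at this
    linarith
  have hmod : ∀ k, F k = F (k % n) := by
    intro k
    conv_lhs => rw [← Nat.mod_add_div k n]
    induction k / n with
    | zero => simp
    | succ q ih => rw [Nat.mul_succ, ← add_assoc, hper, ih]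
  -- `F` is `n`-periodic, so a maximum over `range n` is a global one.
  obtain ⟨i, -, hi⟩ := exists_max_image (range n) F (nonempty_range_iff.2 (NeZero.ne n))
  refine ⟨i, fun k => ?_⟩
  rw [hshift, hmod (i + k)]
  linarith [hi ((i + k) % n) (mem_range.2 (Nat.mod_lt _ (NeZero.pos n)))]

lemma ContinuousLinearMap.apply_eq_dotProduct {ι : Type*} [Fintype ι] [DecidableEq ι]
    (f : (ι → ℝ) →L[ℝ] ℝ) (y : ι → ℝ) :
    f y = y ⬝ᵥ fun j => f (Pi.single j 1) := by
  refine (f.toLinearMap.pi_apply_eq_sum_univ y).trans (sum_congr rfl fun i _ => ?_)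
  simp only [smul_eq_mul, ← Pi.single_apply, Pi.single_comm]
  rfl

theorem Matrix.exists_nonneg_vecMul_eq {m n : Type*} [Fintype m] [Fintype n] [DecidableEq m]
    [DecidableEq n] (B : Matrix m n ℝ) {b c : n → ℝ} (hc : ∀ i, 0 < (B *ᵥ c) i)
    (hb : ∀ z, (∀ i, 0 < (B *ᵥ z) i) → 0 < b ⬝ᵥ z) :
    ∃ x, 0 ≤ x ∧ x ᵥ* B = b := by
  by_contra! hne
  have hbc : 0 < b ⬝ᵥ c := hb c hc
  have hb0 : b ≠ 0 := by rintro rfl; simp at hbc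
  set K := vecMulLinear B '' stdSimplex ℝ m
  set R := LinearMap.toSpanSingleton ℝ _ b '' Set.Ici 0
  have hdisj : Disjoint K R := by
    rw [Set.disjoint_left]
    rintro _ ⟨y, ⟨hy0, hy1⟩, rfl⟩ ⟨s, hs : 0 ≤ s, hsy : s • b = y ᵥ* B⟩
    obtain ⟨i, hi⟩ : ∃ i, 0 < y i := by
      by_contra! h
      linarith [sum_nonpos fun i (_ : i ∈ univ) => h i]
    have hpos : 0 < y ⬝ᵥ (B *ᵥ c) := sum_pos' (fun j _ => mul_nonneg (hy0 j) (hc j).le)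
      ⟨i, mem_univ i, mul_pos hi (hc i)⟩
    rw [dotProduct_mulVec, ← hsy, smul_dotProduct, smul_eq_mul] at hpos
    have hs0 : 0 < s := pos_of_mul_pos_left hpos hbc.le
    refine hne (s⁻¹ • y) (smul_nonneg (inv_nonneg.2 hs) hy0) ?_
    rw [smul_vecMul, ← hsy, smul_smul, inv_mul_cancel₀ hs0.ne', one_smul]
  obtain ⟨f, u, v, hfK, huv, hfR⟩ := geometric_hahn_banach_compact_closed
    ((convex_stdSimplex ℝ m).linear_image (vecMulLinear B))
    ((isCompact_stdSimplex ℝ m).image (vecMulLinear B).continuous_of_finiteDimensional)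
    ((convex_Ici 0).linear_image (LinearMap.toSpanSingleton ℝ _ b))
    ((isClosedEmbedding_smul_left hb0).isClosedMap _ isClosed_Ici) hdisj
  set z : n → ℝ := fun j => f (Pi.single j 1)
  have hv : v < 0 := by simpa using hfR 0 ⟨0, Set.self_mem_Ici, zero_smul ℝ b⟩
  have hBz : ∀ i, 0 < (B *ᵥ -z) i := by
    intro i
    have := hfK _ ⟨_, single_mem_stdSimplex ℝ i, rfl⟩
    rw [f.apply_eq_dotProduct, vecMulLinear_apply, ← dotProduct_mulVec,
      single_one_dotProduct] at this
    rw [mulVec_neg, Pi.neg_apply]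
    linarith
  have hfb : f b < 0 := by
    have := hb _ hBz
    rw [dotProduct_neg, ← f.apply_eq_dotProduct] at this
    linarith
  have := hfR ((v / f b) • b) ⟨v / f b, div_nonneg_of_nonpos hv.le hfb.le, rfl⟩
  rw [map_smul, smul_eq_mul, div_mul_cancel₀ _ hfb.ne] at this
  exact lt_irrefl v this

namespace CyclicNonIncr

variable {n : ℕ} [NeZero n] {A : Matrix (Fin n) (Fin n) ℝ}

lemma apply_add_succ_le (hA : CyclicNonIncr A) (i : Fin n) {k : ℕ} (hk : k + 1 < n) :
    A i (i + ↑(k + 1)) ≤ A i (i + ↑k) := by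
  have hne : i + ↑(k + 1) ≠ i := by
    rw [Ne, add_eq_left, ← Fin.val_eq_val, Fin.val_natCast, Nat.mod_eq_of_lt hk]
    exact k.succ_ne_zero
  simpa only [Nat.cast_succ, ← add_assoc, add_sub_cancel_right] using hA i _ hne

theorem exists_mulVec_nonpos (hA : CyclicNonIncr A) {w : Fin n → ℝ} (hw : ∑ j, w j = 0) :
    ∃ i, (A *ᵥ w) i ≤ 0 := by
  obtain ⟨i, hi⟩ := Fin.exists_forall_sum_range_add_nonpos w hw
  refine ⟨i, ?_⟩
  rw [mulVec, dotProduct, Fin.sum_univ_eq_sum_range_add _ i]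
  exact sum_range_mul_nonpos_of_antitone (fun k hk => hA.apply_add_succ_le i hk)
    (fun k _ => hi k) (by rw [← Fin.sum_univ_eq_sum_range_add w i, hw])

theorem exists_mulVec_le (hA : CyclicNonIncr A) (z : Fin n → ℝ) :
    ∃ i, n * (A *ᵥ z) i ≤ (∑ j, z j) * (A *ᵥ 1) i := by
  have hn : (n : ℝ) ≠ 0 := Nat.cast_ne_zero.2 (NeZero.ne n)
  obtain ⟨i, hi⟩ := hA.exists_mulVec_nonpos (w := z - ((∑ j, z j) / n) • 1) (by
    simp [sum_sub_distrib, mul_div_cancel₀ _ hn])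
  refine ⟨i, ?_⟩
  rw [mulVec_sub, mulVec_smul, Pi.sub_apply, Pi.smul_apply, smul_eq_mul, sub_nonpos] at hi
  calc n * (A *ᵥ z) i ≤ n * ((∑ j, z j) / n * (A *ᵥ 1) i) := by gcongr
    _ = (∑ j, z j) * (A *ᵥ 1) i := by field_simp

theorem sum_nonneg_of_mulVec_nonneg (hA : CyclicNonIncr A) (hrow : ∀ i, 0 < (A *ᵥ 1) i)
    {z : Fin n → ℝ} (hz : ∀ i, 0 ≤ (A *ᵥ z) i) : 0 ≤ ∑ j, z j := by
  obtain ⟨i, hi⟩ := hA.exists_mulVec_le z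
  exact nonneg_of_mul_nonneg_left ((mul_nonneg n.cast_nonneg (hz i)).trans hi) (hrow i)

theorem sum_pos_of_mulVec_pos (hA : CyclicNonIncr A) (hrow : ∀ i, 0 < (A *ᵥ 1) i)
    {z : Fin n → ℝ} (hz : ∀ i, 0 < (A *ᵥ z) i) : 0 < ∑ j, z j := by
  obtain ⟨i, hi⟩ := hA.exists_mulVec_le z
  exact pos_of_mul_pos_left ((mul_pos (Nat.cast_pos.2 (NeZero.pos n)) (hz i)).trans_le hi)
    (hrow i).le

end CyclicNonIncr

theorem stmt_5_general (n : ℕ) [NeZero n] (A : Matrix (Fin n) (Fin n) ℝ)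
    (hA : CyclicNonIncr A)
    (hrow : ∀ i, 0 < A.mulVec (fun _ => (1 : ℝ)) i) :
    (∀ z : Fin n → ℝ, A.mulVec z = 0 → ∑ i, z i = 0) ∧
    ∃ x : Fin n → ℝ, 0 ≤ x ∧ Aᵀ.mulVec x = fun _ => (1 : ℝ) := by
  refine ⟨fun z hz => le_antisymm ?_ ?_, ?_⟩
  · simpa using hA.sum_nonneg_of_mulVec_nonneg hrow (z := -z) (by simp [mulVec_neg, hz])
  · exact hA.sum_nonneg_of_mulVec_nonneg hrow (by simp [hz])
  · obtain ⟨x, hx0, hx⟩ := exists_nonneg_vecMul_eq A hrow fun z hz => by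
      rw [one_dotProduct]
      exact hA.sum_pos_of_mulVec_pos hrow hz
    exact ⟨x, hx0, by rw [mulVec_transpose, hx]; rfl⟩

theorem stmt_5 (n : ℕ) [NeZero n] (hn : 1 ≤ n) (A : Matrix (Fin n) (Fin n) ℝ)
    (hA : CyclicNonIncr A)
    (hrow : ∀ i, 0 < A.mulVec (fun _ => (1 : ℝ)) i) :
    (∀ z : Fin n → ℝ, A.mulVec z = 0 → ∑ i, z i = 0) ∧
    ∃ x : Fin n → ℝ, 0 ≤ x ∧ Aᵀ.mulVec x = fun _ => (1 : ℝ) :=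
  stmt_5_general n A hA hrow
end

section
/- Let n ≥ 1 and let A be a real n×n matrix satisfying the cyclic non-increasing condition. If the graph 𝒢(A) has at least two closed strongly connected components, or exactly one closed strongly connected component which is null, then det A = 0. -/
open Matrix BigOperators

/-!
Write `L i j = a_{ij} - a_{i[j-1]}`. Every row of `L` sums to zero, and on a closed component `C`
the cyclic condition forces `L i j = 0` for `i ∈ C`, `j ∉ C`. Hence the block `L_{CC}` has zero row
sums, so it is singular, and a left null vector of it extends by zero to some `x ≠ 0` supported on
`C` with `xᵀ L = 0`, i.e. `xᵀ A` is a constant vector `c • 1`. If `c = 0` then `A` is singular; if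
`c ≠ 0` then `c⁻¹ x` is a fundamental solution of `C`, which excludes the null case. With two
closed components, the two vectors have disjoint supports and a combination of them kills `A`.
-/

theorem Fin.sum_comp_sub_one {n : ℕ} [NeZero n] {M : Type*} [AddCommMonoid M] (f : Fin n → M) :
    ∑ j, f (j - 1) = ∑ j, f j :=
  Fintype.sum_equiv (Equiv.subRight 1) _ _ fun _ => rfl

open Fin.NatCast in
theorem Fin.apply_eq_apply_zero_of_forall_apply_eq_apply_sub_one {n : ℕ} [NeZero n] {α : Type*}
    {f : Fin n → α} (hf : ∀ j, f j = f (j - 1)) (j : Fin n) : f j = f 0 := by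
  have key : ∀ k : ℕ, f k = f 0 := by
    intro k
    induction k with
    | zero => simp
    | succ k ih => rw [hf, Nat.cast_succ, add_sub_cancel_right, ih]
  simpa using key j

theorem Matrix.exists_vecMul_eq_zero_of_sum_row_eq_zero {ι K : Type*} [Fintype ι] [Field K]
    (L : Matrix ι ι K) {C : Finset ι} (hC : C.Nonempty) (hrow : ∀ i ∈ C, ∑ j ∈ C, L i j = 0) :
    ∃ x : ι → K, x ≠ 0 ∧ (∀ i ∉ C, x i = 0) ∧ ∀ j ∈ C, ∑ i ∈ C, x i * L i j = 0 := by
  classical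
  set M : Matrix C C K := L.submatrix (↑) (↑)
  have hdet : M.det = 0 := by
    refine exists_mulVec_eq_zero_iff.1 ⟨1, fun h => ?_, funext fun i => ?_⟩
    · obtain ⟨i, hi⟩ := hC
      exact one_ne_zero (congrFun h ⟨i, hi⟩)
    · simpa [M, mulVec, dotProduct] using Finset.sum_coe_sort C (L i) ▸ hrow i i.2
  obtain ⟨w, hw0, hw⟩ := exists_vecMul_eq_zero_iff.2 hdet
  refine ⟨fun i => if h : i ∈ C then w ⟨i, h⟩ else 0, fun h => hw0 (funext fun i => ?_),
    fun i hi => dif_neg hi, fun j hj => ?_⟩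
  · simpa using congrFun h i
  · rw [← Finset.sum_coe_sort C]
    simpa [M, vecMul, dotProduct] using congrFun hw ⟨j, hj⟩

section Cyclic

variable {n : ℕ} [NeZero n] {A : Matrix (Fin n) (Fin n) ℝ}

theorem CyclicNonIncr.eq_of_not_graphEdge (hA : CyclicNonIncr A) {i j : Fin n} (hji : j ≠ i)
    (hij : ¬ GraphEdge A i j) : A i (j - 1) = A i j :=
  le_antisymm (not_lt.1 hij) (hA i j hji)

theorem CyclicNonIncr.exists_vecMul_eq_const (hA : CyclicNonIncr A) {C : Set (Fin n)}
    (hne : C.Nonempty) (hclosed : ∀ i ∈ C, ∀ j, GraphEdge A i j → j ∈ C) :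
    ∃ x : Fin n → ℝ, x ≠ 0 ∧ (∀ i ∉ C, x i = 0) ∧ ∃ c, x ᵥ* A = fun _ => c := by
  set L : Matrix (Fin n) (Fin n) ℝ := fun i j => A i j - A i (j - 1)
  have hL_out : ∀ i ∈ C, ∀ j ∉ C, L i j = 0 := fun i hi j hj =>
    sub_eq_zero.2 (hA.eq_of_not_graphEdge (ne_of_mem_of_not_mem hi hj).symm
      fun h => hj (hclosed i hi j h)).symm
  have hL_row : ∀ i, ∑ j, L i j = 0 := fun i => by
    simp only [L, Finset.sum_sub_distrib, Fin.sum_comp_sub_one (A i), sub_self]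
  set F := C.toFinite.toFinset
  have hF : ∀ i, i ∈ F ↔ i ∈ C := fun i => Set.Finite.mem_toFinset _
  obtain ⟨x, hx0, hxF, hxL_block⟩ := L.exists_vecMul_eq_zero_of_sum_row_eq_zero
    (C.toFinite.toFinset_nonempty.2 hne : F.Nonempty) fun i hi => by
      rw [Finset.sum_subset F.subset_univ fun j _ hj => hL_out i ((hF i).1 hi) j (mt (hF j).2 hj)]
      exact hL_row i
  have hxC : ∀ i ∉ C, x i = 0 := fun i hi => hxF i (mt (hF i).1 hi)
  have hxL_all : ∀ j, (x ᵥ* L) j = 0 := fun j => by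
    rw [vecMul, dotProduct, ← Finset.sum_subset F.subset_univ fun i _ hi => by
      rw [hxF i hi, zero_mul]]
    by_cases hj : j ∈ F
    · exact hxL_block j hj
    · exact Finset.sum_eq_zero fun i hi =>
        by rw [hL_out i ((hF i).1 hi) j (mt (hF j).2 hj), mul_zero]
  refine ⟨x, hx0, hxC, (x ᵥ* A) 0,
    funext (Fin.apply_eq_apply_zero_of_forall_apply_eq_apply_sub_one fun j => ?_)⟩
  simpa only [L, vecMul, dotProduct, mul_sub, Finset.sum_sub_distrib, sub_eq_zero] using hxL_all j

theorem isFundSol_inv_smul {C : Finset (Fin n)} {x : Fin n → ℝ} {c : ℝ} (hxC : ∀ i ∉ C, x i = 0)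
    (hx : x ᵥ* A = fun _ => c) (hc : c ≠ 0) : IsFundSol A C (c⁻¹ • x) := by
  refine ⟨fun i hi => by simp [hxC i hi], fun j _ => ?_⟩
  have hsum : ∑ i ∈ C, x i * A i j = c := by
    rw [Finset.sum_subset C.subset_univ fun i _ hi => by rw [hxC i hi, zero_mul]]
    exact congrFun hx j
  calc ∑ i ∈ C, A i j * (c⁻¹ • x) i = c⁻¹ * ∑ i ∈ C, x i * A i j := by
        rw [Finset.mul_sum]
        exact Finset.sum_congr rfl fun i _ => by simp only [Pi.smul_apply, smul_eq_mul]; ring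
    _ = 1 := by rw [hsum, inv_mul_cancel₀ hc]

end Cyclic

theorem Matrix.det_eq_zero_of_vecMul_eq_const {ι K : Type*} [Fintype ι] [DecidableEq ι] [Field K]
    {A : Matrix ι ι K} {x₁ x₂ : ι → K} {c₁ c₂ : K} (h₁ : x₁ ᵥ* A = fun _ => c₁)
    (h₂ : x₂ ᵥ* A = fun _ => c₂) (hx₁ : x₁ ≠ 0) {i : ι} (hx₁i : x₁ i = 0) (hx₂i : x₂ i ≠ 0) :
    A.det = 0 := by
  refine exists_vecMul_eq_zero_iff.1 ?_
  by_cases hc₁ : c₁ = 0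
  · exact ⟨x₁, hx₁, h₁.trans (funext fun _ => hc₁)⟩
  refine ⟨c₂ • x₁ - c₁ • x₂, fun h => ?_, ?_⟩
  · simpa [hx₁i, hc₁, hx₂i] using congrFun h i
  · rw [sub_vecMul, smul_vecMul, smul_vecMul, h₁, h₂]
    funext j
    simp [mul_comm]

section SCC

variable {n : ℕ} [NeZero n] {A : Matrix (Fin n) (Fin n) ℝ} {C C₁ C₂ : Set (Fin n)}

theorem IsSCC.nonempty_s8 (h : IsSCC A C) : C.Nonempty := by
  obtain ⟨i, rfl⟩ := h
  exact ⟨i, .refl, .refl⟩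

theorem IsSCC.disjoint_s8 (h₁ : IsSCC A C₁) (h₂ : IsSCC A C₂) (hne : C₁ ≠ C₂) : Disjoint C₁ C₂ := by
  obtain ⟨i₁, rfl⟩ := h₁
  obtain ⟨i₂, rfl⟩ := h₂
  refine Set.disjoint_left.2 fun z hz₁ hz₂ => hne (Set.ext fun j => ⟨fun hj => ?_, fun hj => ?_⟩)
  · exact ⟨(hz₂.1.trans hz₁.2).trans hj.1, hj.2.trans (hz₁.1.trans hz₂.2)⟩
  · exact ⟨(hz₁.1.trans hz₂.2).trans hj.1, hj.2.trans (hz₂.1.trans hz₁.2)⟩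

end SCC

theorem stmt_8_general (n : ℕ) [NeZero n] (A : Matrix (Fin n) (Fin n) ℝ)
    (hA : CyclicNonIncr A)
    (h : (∃ C₁ C₂ : Set (Fin n), IsClosedSCC A C₁ ∧ IsClosedSCC A C₂ ∧ C₁ ≠ C₂) ∨
      (∃ C : Finset (Fin n), IsClosedSCC A (↑C : Set (Fin n)) ∧
        (∀ C' : Set (Fin n), IsClosedSCC A C' → C' = ↑C) ∧
        ¬ ∃ y, IsFundSol A C y)) :
    A.det = 0 := by
  rcases h with ⟨C₁, C₂, hC₁, hC₂, hne⟩ | ⟨C, hC, -, hnofund⟩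
  · obtain ⟨x₁, hx₁, hx₁C, c₁, hc₁⟩ := hA.exists_vecMul_eq_const hC₁.1.nonempty_s8 hC₁.2
    obtain ⟨x₂, hx₂, hx₂C, c₂, hc₂⟩ := hA.exists_vecMul_eq_const hC₂.1.nonempty_s8 hC₂.2
    obtain ⟨i, hi⟩ := Function.ne_iff.1 hx₂
    have hi₂ : i ∈ C₂ := not_imp_comm.1 (hx₂C i) hi
    exact det_eq_zero_of_vecMul_eq_const hc₁ hc₂ hx₁
      (hx₁C i ((hC₁.1.disjoint_s8 hC₂.1 hne).notMem_of_mem_right hi₂)) hi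
  · obtain ⟨x, hx, hxC, c, hc⟩ := hA.exists_vecMul_eq_const hC.1.nonempty_s8 hC.2
    have hc0 : c = 0 := by_contra fun hc0 => hnofund ⟨_, isFundSol_inv_smul hxC hc hc0⟩
    exact exists_vecMul_eq_zero_iff.1 ⟨x, hx, hc.trans (funext fun _ => hc0)⟩

theorem stmt_8 (n : ℕ) [NeZero n] (hn : 1 ≤ n) (A : Matrix (Fin n) (Fin n) ℝ)
    (hA : CyclicNonIncr A)
    (h : (∃ C₁ C₂ : Set (Fin n), IsClosedSCC A C₁ ∧ IsClosedSCC A C₂ ∧ C₁ ≠ C₂) ∨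
      (∃ C : Finset (Fin n), IsClosedSCC A (↑C : Set (Fin n)) ∧
        (∀ C' : Set (Fin n), IsClosedSCC A C' → C' = ↑C) ∧
        ¬ ∃ y, IsFundSol A C y)) :
    A.det = 0 :=
  stmt_8_general n A hA h
end

section
/- Let n ≥ 1 and let A = (a_{ij}) be a real n×n matrix with all entries non-negative such that for every row i, a_{ii} > a_{i[i+1]} ≥ a_{i[i+2]} ≥ … ≥ a_{i[i+n−1]} (the diagonal entry strictly exceeds the next entry in cyclic order, and the row weakly decreases cyclically thereafter). Then A is a P-matrix. -/
/-!
Call a matrix cyclically decreasing when every row, read cyclically from the diagonal and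
padded with zeros, is antitone with a strict first step. This class contains the identity, is
convex, and is closed under taking principal submatrices, since a strictly monotone map
`Fin m → Fin n` preserves the cyclic order seen from any point. Its members are nonsingular:
if `A x = 0` with `x ≠ 0` and `∑ x ≥ 0`, pick a cyclic starting point `i` with `x i > 0` and all
cyclic partial sums from `i` nonnegative; Abel summation writes `(A x) i` as a sum of
nonnegative terms with a positive first one. So the determinant does not vanish on the segment
from `1` to `A` and stays positive, and the same holds for every principal submatrix.
-/

open Matrix Finset

/-- A square real matrix is a `P`-matrix if all its principal minors
(over nonempty index subsets) are strictly positive. -/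
def IsPMatrix {n : ℕ} [NeZero n] (A : Matrix (Fin n) (Fin n) ℝ) : Prop :=
  ∀ S : Finset (Fin n), S.Nonempty →
    0 < (A.submatrix (fun i : {a // a ∈ S} => (i : Fin n))
          (fun j : {a // a ∈ S} => (j : Fin n))).det

theorem sum_range_mul_eq_summation_by_parts (r y : ℕ → ℝ) (n : ℕ) :
    ∑ k ∈ range n, r k * y k = r n * ∑ m ∈ range n, y m
      + ∑ k ∈ range n, (r k - r (k + 1)) * ∑ m ∈ range (k + 1), y m := by
  induction n with
  | zero => simp
  | succ n ih =>
    rw [sum_range_succ, ih, sum_range_succ (fun k => (r k - r (k + 1)) * _), sum_range_succ y n]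
    ring

theorem sum_range_mul_pos_of_antitone {r y : ℕ → ℝ} {n : ℕ} (hn : 0 < n) (hr : Antitone r)
    (hr₁ : r 1 < r 0) (hrn : 0 ≤ r n) (hy₀ : 0 < y 0)
    (hy : ∀ l ≤ n, 0 ≤ ∑ m ∈ range l, y m) : 0 < ∑ k ∈ range n, r k * y k := by
  rw [sum_range_mul_eq_summation_by_parts]
  refine add_pos_of_nonneg_of_pos (mul_nonneg hrn (hy n le_rfl)) ?_
  refine sum_pos' (fun k hk => mul_nonneg (sub_nonneg.2 (hr k.le_succ)) (hy _ ?_)) ⟨0, ?_, ?_⟩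
  · exact mem_range.1 hk
  · exact mem_range.2 hn
  · simpa using mul_pos (sub_pos.2 hr₁) hy₀

theorem Matrix.det_pos_of_isPreconnected {ι : Type*} [Fintype ι] [DecidableEq ι]
    {s : Set (Matrix ι ι ℝ)} (hs : IsPreconnected s) (h₁ : 1 ∈ s) (hdet : ∀ B ∈ s, B.det ≠ 0)
    {A : Matrix ι ι ℝ} (hA : A ∈ s) : 0 < A.det := by
  by_contra! h
  obtain ⟨B, hB, hB₀⟩ :=
    hs.intermediate_value hA h₁ continuous_id.matrix_det.continuousOn ⟨h, by simp⟩
  exact hdet B hB hB₀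

section

open Fin.NatCast

theorem Fin.val_sub_eq_ite {n : ℕ} (a b : Fin n) :
    (a - b).val = if b ≤ a then a.val - b.val else n + a.val - b.val := by
  split_ifs with h
  exacts [Fin.sub_val_of_le h, Fin.coe_sub_iff_lt.2 (not_le.1 h)]

theorem StrictMono.val_sub_le_val_sub {m n : ℕ} {f : Fin m → Fin n} (hf : StrictMono f)
    {p q q' : Fin m} (h : (q - p).val ≤ (q' - p).val) :
    (f q - f p).val ≤ (f q' - f p).val := by
  have hq := hf.le_iff_le (a := p) (b := q)
  have hq' := hf.le_iff_le (a := p) (b := q')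
  have hqq' := hf.le_iff_le (a := q) (b := q')
  rw [Fin.val_sub_eq_ite, Fin.val_sub_eq_ite] at h ⊢
  simp only [Fin.le_def] at *
  split_ifs at h ⊢ <;> omega

theorem Fin.val_add_natCast_sub {n : ℕ} [NeZero n] (i : Fin n) {k : ℕ} (hk : k < n) :
    (i + k - i).val = k := by
  simp [Fin.val_natCast, Nat.mod_eq_of_lt hk]

section CyclicSum

variable {n : ℕ} [NeZero n]

def cyclicSum (x : Fin n → ℝ) (i : Fin n) (l : ℕ) : ℝ := ∑ m ∈ range l, x (i + m)

theorem cyclicSum_add (x : Fin n → ℝ) (i : Fin n) (l₁ l₂ : ℕ) :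
    cyclicSum x i (l₁ + l₂) = cyclicSum x i l₁ + cyclicSum x (i + l₁) l₂ := by
  simp only [cyclicSum, sum_range_add, Nat.cast_add, add_assoc]

theorem cyclicSum_split (x : Fin n → ℝ) (i : Fin n) {l l' : ℕ} (h : l ≤ l') :
    cyclicSum x i l' = cyclicSum x i l + cyclicSum x (i + l) (l' - l) := by
  rw [← cyclicSum_add, Nat.add_sub_cancel' h]

theorem cyclicSum_one (x : Fin n → ℝ) (i : Fin n) : cyclicSum x i 1 = x i := by
  simp [cyclicSum]

theorem cyclicSum_self (x : Fin n → ℝ) (i : Fin n) : cyclicSum x i n = ∑ j, x j := by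
  rw [cyclicSum, ← Fin.sum_univ_eq_sum_range (fun m => x (i + m))]
  simp only [Fin.cast_val_eq_self]
  exact Equiv.sum_comp (Equiv.addLeft i) x

/-- The start of a cyclic interval of maximal sum, chosen of minimal length among those. -/
theorem exists_pos_forall_cyclicSum_nonneg (x : Fin n → ℝ) (hx : ∃ j, 0 < x j)
    (hsum : 0 ≤ ∑ j, x j) : ∃ i, 0 < x i ∧ ∀ l ≤ n, 0 ≤ cyclicSum x i l := by
  obtain ⟨⟨i, l⟩, hl, hmax⟩ := (univ ×ˢ range (n + 1)).exists_max_image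
    (fun p => toLex (cyclicSum x p.1 p.2, OrderDual.toDual p.2)) ⟨(0, 0), by simp⟩
  simp only [mem_product, mem_univ, mem_range, true_and, Prod.forall, Prod.Lex.le_iff,
    ofLex_toLex, OrderDual.toDual_le_toDual] at hl hmax
  set M := cyclicSum x i l
  have hle : ∀ j l', l' ≤ n → cyclicSum x j l' ≤ M := fun j l' hl' =>
    (hmax j l' (by omega)).elim le_of_lt (fun h => h.1.le)
  obtain ⟨j, hj⟩ := hx
  have hM : 0 < M := (hle j 1 NeZero.one_le).trans_lt' (by rwa [cyclicSum_one])
  have hl₀ : 1 ≤ l := Nat.one_le_iff_ne_zero.2 fun h => by simp [M, h, cyclicSum] at hM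
  refine ⟨i, ?_, fun l' hl' => ?_⟩
  · have hshorter : cyclicSum x (i + 1) (l - 1) < M := by
      rcases hmax (i + 1) (l - 1) (by omega) with h | h
      exacts [h, absurd h.2 (by omega)]
    have := cyclicSum_split x i hl₀
    rw [cyclicSum_one, Nat.cast_one] at this
    linarith
  · rcases le_total l' l with h | h
    · linarith [cyclicSum_split x i h, hle (i + l') (l - l') (by omega)]
    · have hcompl := cyclicSum_split x (i + l) (show l' - l ≤ n by omega)
      rw [cyclicSum_self] at hcompl
      linarith [cyclicSum_split x i h, hle (i + l + (l' - l : ℕ)) (n - (l' - l)) (by omega)]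

end CyclicSum

section CyclicRow

variable {n : ℕ} [NeZero n] {A : Matrix (Fin n) (Fin n) ℝ}

/-- Row `i` of `A` read cyclically from the diagonal, padded with zeros, so that its
antitonicity includes the nonnegativity of the row. -/
def cyclicRow (A : Matrix (Fin n) (Fin n) ℝ) (i : Fin n) (k : ℕ) : ℝ :=
  if k < n then A i (i + k) else 0

theorem cyclicRow_of_lt (i : Fin n) {k : ℕ} (hk : k < n) : cyclicRow A i k = A i (i + k) :=
  if_pos hk

theorem cyclicRow_of_le (i : Fin n) {k : ℕ} (hk : n ≤ k) : cyclicRow A i k = 0 :=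
  if_neg hk.not_gt

theorem cyclicRow_zero (i : Fin n) : cyclicRow A i 0 = A i i := by
  simp [cyclicRow_of_lt i (NeZero.pos n)]

theorem cyclicRow_val_sub (i j : Fin n) : cyclicRow A i (j - i).val = A i j := by
  simp [cyclicRow_of_lt i (j - i).isLt]

theorem cyclicRow_nonneg (hA : ∀ i j, 0 ≤ A i j) (i : Fin n) (k : ℕ) : 0 ≤ cyclicRow A i k := by
  unfold cyclicRow
  split_ifs
  exacts [hA _ _, le_rfl]

theorem mulVec_eq_sum_cyclicRow (x : Fin n → ℝ) (i : Fin n) :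
    (A *ᵥ x) i = ∑ k ∈ range n, cyclicRow A i k * x (i + k) := by
  rw [← Fin.sum_univ_eq_sum_range (fun k => cyclicRow A i k * x (i + k)), mulVec, dotProduct,
    ← Equiv.sum_comp (Equiv.addLeft i)]
  simp [cyclicRow_of_lt i (Fin.isLt _)]

def IsCyclicallyDecreasing (A : Matrix (Fin n) (Fin n) ℝ) : Prop :=
  ∀ i, Antitone (cyclicRow A i) ∧ cyclicRow A i 1 < cyclicRow A i 0

theorem isCyclicallyDecreasing_of_consecutive (hpos : ∀ i j, 0 ≤ A i j)
    (hdiag : ∀ i : Fin n, A i (i + 1) < A i i)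
    (hrest : ∀ i j : Fin n, j ≠ i → j ≠ i + 1 → A i (j - 1) ≥ A i j) :
    IsCyclicallyDecreasing A := by
  intro i
  refine ⟨antitone_nat_of_succ_le fun k => ?_, ?_⟩
  · rcases lt_or_ge (k + 1) n with hk | hk
    · rw [cyclicRow_of_lt i hk, cyclicRow_of_lt i (by omega)]
      rcases k with _ | k
      · simpa using (hdiag i).le
      · have hval := Fin.val_add_natCast_sub i hk
        have h := hrest i (i + (k + 1 + 1 : ℕ)) ?_ ?_
        · simpa [add_sub_assoc] using h
        · rintro h
          rw [h, sub_self] at hval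
          simp at hval
        · rintro h
          rw [h, add_sub_cancel_left, Fin.val_one', Nat.mod_eq_of_lt (by omega)] at hval
          omega
    · rw [cyclicRow_of_le i hk]
      exact cyclicRow_nonneg hpos i k
  · rw [cyclicRow_zero]
    refine lt_of_le_of_lt ?_ (hdiag i)
    rcases lt_or_ge 1 n with hn | hn
    · rw [cyclicRow_of_lt i hn, Nat.cast_one]
    · rw [cyclicRow_of_le i hn]
      exact hpos _ _

namespace IsCyclicallyDecreasing

variable (hA : IsCyclicallyDecreasing A)
include hA

theorem nonneg (i j : Fin n) : 0 ≤ A i j := by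
  rw [← cyclicRow_val_sub (A := A), ← cyclicRow_of_le (A := A) i le_rfl]
  exact (hA i).1 (j - i).isLt.le

theorem diag_pos (i : Fin n) : 0 < A i i := by
  rw [← cyclicRow_zero (A := A)]
  exact (cyclicRow_nonneg hA.nonneg i 1).trans_lt (hA i).2

theorem le_of_val_sub_le {i j j' : Fin n} (h : (j - i).val ≤ (j' - i).val) : A i j' ≤ A i j := by
  rw [← cyclicRow_val_sub (A := A), ← cyclicRow_val_sub (A := A) i j]
  exact (hA i).1 h

theorem lt_diag {i j : Fin n} (hij : j ≠ i) : A i j < A i i := by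
  rw [← cyclicRow_val_sub (A := A), ← cyclicRow_zero (A := A)]
  refine ((hA i).1 ?_).trans_lt (hA i).2
  exact Nat.one_le_iff_ne_zero.2 (by simpa [Fin.ext_iff, sub_eq_zero] using hij)

theorem det_ne_zero : A.det ≠ 0 := by
  intro h
  obtain ⟨x, hx₀, hx⟩ := exists_mulVec_eq_zero_iff.2 h
  wlog hsum : 0 ≤ ∑ j, x j generalizing x
  · exact this (-x) (neg_ne_zero.2 hx₀) (by rw [mulVec_neg, hx, neg_zero])
      (by simp only [Pi.neg_apply, sum_neg_distrib]; linarith)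
  have hpos : ∃ j, 0 < x j := by
    by_contra! hx
    exact hx₀ (funext fun j => (sum_eq_zero_iff_of_nonpos fun j _ => hx j).1
      (le_antisymm (sum_nonpos fun j _ => hx j) hsum) j (mem_univ j))
  obtain ⟨i, hi, hpartial⟩ := exists_pos_forall_cyclicSum_nonneg x hpos hsum
  have hrow := congrFun hx i
  rw [mulVec_eq_sum_cyclicRow] at hrow
  refine (sum_range_mul_pos_of_antitone (NeZero.pos n) (hA i).1 (hA i).2 ?_ ?_ hpartial).ne' hrow
  · exact (cyclicRow_of_le i le_rfl).ge
  · simpa using hi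

theorem submatrix {m : ℕ} [NeZero m] {f : Fin m → Fin n} (hf : StrictMono f) :
    IsCyclicallyDecreasing (A.submatrix f f) := by
  intro p
  have hnonneg := cyclicRow_nonneg (A := A.submatrix f f) fun _ _ => hA.nonneg _ _
  refine ⟨fun k k' hkk' => ?_, ?_⟩
  · rcases lt_or_ge k' m with hk' | hk'
    · rw [cyclicRow_of_lt p hk', cyclicRow_of_lt p (hkk'.trans_lt hk')]
      refine hA.le_of_val_sub_le (hf.val_sub_le_val_sub ?_)
      rwa [Fin.val_add_natCast_sub p hk', Fin.val_add_natCast_sub p (hkk'.trans_lt hk')]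
    · rw [cyclicRow_of_le p hk']
      exact hnonneg p k
  · rw [cyclicRow_zero, submatrix_apply]
    rcases lt_or_ge 1 m with hm | hm
    · rw [cyclicRow_of_lt p hm, submatrix_apply, Nat.cast_one]
      refine hA.lt_diag (hf.injective.ne ?_)
      simpa [Fin.ext_iff] using hm.ne'
    · rw [cyclicRow_of_le p hm]
      exact hA.diag_pos _

end IsCyclicallyDecreasing

theorem convex_setOf_isCyclicallyDecreasing :
    Convex ℝ {A : Matrix (Fin n) (Fin n) ℝ | IsCyclicallyDecreasing A} := by
  intro A hA B hB a b ha hb hab i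
  have hrow : cyclicRow (a • A + b • B) i = a • cyclicRow A i + b • cyclicRow B i := by
    ext k
    simp only [cyclicRow, Matrix.add_apply, Matrix.smul_apply, Pi.add_apply, Pi.smul_apply]
    split_ifs <;> simp
  rw [hrow]
  refine ⟨fun k k' hk => ?_, ?_⟩
  · simp only [Pi.add_apply, Pi.smul_apply, smul_eq_mul]
    gcongr
    exacts [(hA i).1 hk, (hB i).1 hk]
  · simp only [Pi.add_apply, Pi.smul_apply, smul_eq_mul]
    rcases ha.eq_or_lt with rfl | ha'
    · rw [zero_add] at hab
      simpa [hab] using (hB i).2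
    · nlinarith [(hA i).2, (hB i).2]

theorem isCyclicallyDecreasing_one : IsCyclicallyDecreasing (1 : Matrix (Fin n) (Fin n) ℝ) := by
  intro i
  have hrow : cyclicRow (1 : Matrix (Fin n) (Fin n) ℝ) i = fun k => if k = 0 then 1 else 0 := by
    ext k
    rcases lt_or_ge k n with hk | hk
    · simp [cyclicRow_of_lt i hk, one_apply, Fin.ext_iff, Fin.val_natCast, Nat.mod_eq_of_lt hk]
    · rw [cyclicRow_of_le i hk, if_neg (by rintro rfl; exact NeZero.ne n (Nat.le_zero.1 hk))]
  rw [hrow]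
  refine ⟨fun k k' hk => ?_, by simp⟩
  dsimp only
  split_ifs <;> norm_num
  omega

theorem IsCyclicallyDecreasing.det_pos (hA : IsCyclicallyDecreasing A) : 0 < A.det :=
  det_pos_of_isPreconnected convex_setOf_isCyclicallyDecreasing.isPreconnected
    isCyclicallyDecreasing_one (fun _ hB => IsCyclicallyDecreasing.det_ne_zero hB) hA

theorem IsCyclicallyDecreasing.isPMatrix (hA : IsCyclicallyDecreasing A) : IsPMatrix A := by
  intro S hS
  have : NeZero S.card := ⟨hS.card_pos.ne'⟩
  rw [← det_submatrix_equiv_self (S.orderIsoOfFin rfl).toEquiv, submatrix_submatrix]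
  exact (hA.submatrix (S.orderEmbOfFin rfl).strictMono).det_pos

end CyclicRow

end

theorem stmt_13_general (n : ℕ) [NeZero n] (A : Matrix (Fin n) (Fin n) ℝ)
    (hpos : ∀ i j, 0 ≤ A i j)
    (hdiag : ∀ i : Fin n, A i (i + 1) < A i i)
    (hrest : ∀ i j : Fin n, j ≠ i → j ≠ i + 1 → A i (j - 1) ≥ A i j) :
    IsPMatrix A :=
  (isCyclicallyDecreasing_of_consecutive hpos hdiag hrest).isPMatrix

theorem stmt_13 (n : ℕ) [NeZero n] (hn : 1 ≤ n) (A : Matrix (Fin n) (Fin n) ℝ)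
    (hpos : ∀ i j, 0 ≤ A i j)
    (hdiag : ∀ i : Fin n, A i (i + 1) < A i i)
    (hrest : ∀ i j : Fin n, j ≠ i → j ≠ i + 1 → A i (j - 1) ≥ A i j) :
    IsPMatrix A :=
  stmt_13_general n A hpos hdiag hrest
end
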